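/- arXiv:2303.04558 — 11 statements merged into one kernel-verified Lean document; each statement's English description precedes it below -/
import Mathlib

section
/- Let f : ℝ^d → ℝ^d be measurable and locally bounded. Then f(x) ∈ F_f(x) for Lebesgue-almost every x ∈ ℝ^d. -/
open MeasureTheory Filter Topology Metric Set
open scoped RealInnerProductSpace

noncomputable section

abbrev Euc (d : ℕ) := EuclideanSpace ℝ (Fin d)

/-- `f` is locally bounded. -/
def LocallyBounded {d : ℕ} (f : Euc d → Euc d) : Prop :=
  ∀ x : Euc d, ∃ r > 0, ∃ C, ∀ y, ‖y - x‖ < r → ‖f y‖ ≤ C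

/-- Filippov set-valued map: intersection over Lebesgue-null sets `N` and radii `δ > 0`
of the closed convex hull of `{f y : ‖y - x‖ < δ, y ∉ N}`. -/
def Filippov {d : ℕ} (f : Euc d → Euc d) (x : Euc d) : Set (Euc d) :=
  ⋂ (N : Set (Euc d)) (_ : volume N = 0) (δ : ℝ) (_ : 0 < δ),
    closure (convexHull ℝ (f '' {y | ‖y - x‖ < δ ∧ y ∉ N}))

/-- Krasovskii set-valued map: intersection over radii `δ > 0` of the closed convex hull
of `{f y : ‖y - x‖ < δ}`. -/
def Krasovskii {d : ℕ} (f : Euc d → Euc d) (x : Euc d) : Set (Euc d) :=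
  ⋂ (δ : ℝ) (_ : 0 < δ), closure (convexHull ℝ (f '' {y | ‖y - x‖ < δ}))

theorem locInt {d : ℕ} (f : Euc d → Euc d) (hf_meas : Measurable f)
    (hf_bdd : LocallyBounded f) : LocallyIntegrable f (volume : Measure (Euc d)) := by
  intro x
  obtain ⟨r, hr, C, hC⟩ := hf_bdd x
  refine ⟨ball x r, ball_mem_nhds x hr, ?_⟩
  have hconst : IntegrableOn (fun _ => C) (ball x r) volume :=
    integrableOn_const measure_ball_lt_top.ne
  refine hconst.mono' hf_meas.aestronglyMeasurable ?_
  filter_upwards [ae_restrict_mem measurableSet_ball] with y hy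
  exact hC y (by simpa [dist_eq_norm] using mem_ball.1 hy)

/-- For a measurable locally bounded `f`, `f x ∈ F_f x` for Lebesgue-a.e. `x`. -/
theorem stmt_2 {d : ℕ} (f : Euc d → Euc d) (hf_meas : Measurable f)
    (hf_bdd : LocallyBounded f) :
    ∀ᵐ x ∂(volume : Measure (Euc d)), f x ∈ Filippov f x := by
  have hli := locInt f hf_meas hf_bdd
  filter_upwards [(Besicovitch.vitaliFamily (volume : Measure (Euc d))).ae_tendsto_average_norm_sub
    hli] with x hx
  have hx' : Tendsto (fun r : ℝ => ⨍ y in closedBall x r, ‖f y - f x‖) (𝓝[>] 0) (𝓝 0) :=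
    hx.comp (Besicovitch.tendsto_filterAt volume x)
  simp only [Filippov, mem_iInter]
  intro N hN δ hδ
  rw [Metric.mem_closure_iff]
  intro ε hε
  -- choose small radius r < δ with average < ε
  have h1 : ∀ᶠ r in 𝓝[>] (0:ℝ), (⨍ y in closedBall x r, ‖f y - f x‖) < ε :=
    hx'.eventually_lt_const hε
  have h2 : ∀ᶠ r in 𝓝[>] (0:ℝ), r < δ := eventually_nhdsWithin_of_eventually_nhds
    (tendsto_id.eventually_lt_const hδ)
  obtain ⟨r, havg, hrδ, hr0⟩ := (h1.and (h2.and self_mem_nhdsWithin)).exists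
  set cB := closedBall x r with hcB
  have hcBpos : 0 < volume cB := measure_closedBall_pos volume x hr0
  have hcBfin : volume cB ≠ ⊤ := measure_closedBall_lt_top.ne
  -- the set of good points has positive measure
  set A := {y | ‖f y - f x‖ < ε} ∩ cB with hA
  have hAmeas : MeasurableSet A :=
    (measurableSet_lt ((hf_meas.sub measurable_const).norm) measurable_const).inter
      measurableSet_closedBall
  have hApos : 0 < volume A := by
    by_contra h
    push_neg at h
    have hA0 : volume A = 0 := le_antisymm h zero_le
    -- then a.e. on cB, ε ≤ ‖f y - f x‖, so average ≥ ε
    have hint : IntegrableOn (fun y => ‖f y - f x‖) cB volume :=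
      ((hli.integrableOn_isCompact (isCompact_closedBall x r)).sub
        (integrableOn_const measure_closedBall_lt_top.ne)).norm
    have hge : ε * (volume cB).toReal ≤ ∫ y in cB, ‖f y - f x‖ := by
      have hae : (fun _ => ε) ≤ᵐ[volume.restrict cB] (fun y => ‖f y - f x‖) := by
        rw [EventuallyLE, ae_restrict_iff' measurableSet_closedBall, ae_iff]
        refine le_antisymm (le_trans (measure_mono ?_) hA0.le) zero_le
        intro y hy
        simp only [Set.mem_setOf_eq, not_forall] at hy
        exact ⟨lt_of_not_ge hy.2, hy.1⟩
      calc ε * (volume cB).toReal = ∫ _ in cB, ε := by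
            rw [setIntegral_const, smul_eq_mul, mul_comm]; rfl
          _ ≤ ∫ y in cB, ‖f y - f x‖ :=
            setIntegral_mono_ae_restrict (integrableOn_const measure_closedBall_lt_top.ne)
              hint hae
    have : ε ≤ ⨍ y in cB, ‖f y - f x‖ := by
      rw [setAverage_eq, smul_eq_mul]
      have htr : 0 < (volume cB).toReal := ENNReal.toReal_pos hcBpos.ne' hcBfin
      calc ε = (volume cB).toReal⁻¹ * (ε * (volume cB).toReal) := by
            field_simp
        _ ≤ _ := mul_le_mul_of_nonneg_left hge (by positivity)
    exact absurd havg (not_lt.2 this)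
  -- remove the null set N
  have : volume (A \ N) ≠ 0 := by
    rw [measure_diff_null hN]; exact hApos.ne'
  obtain ⟨y, hyA, hyN⟩ := nonempty_of_measure_ne_zero this
  refine ⟨f y, ?_, ?_⟩
  · exact subset_convexHull ℝ _ ⟨y, ⟨lt_of_le_of_lt (mem_closedBall_iff_norm.1 hyA.2) hrδ, hyN⟩, rfl⟩
  · rw [dist_eq_norm, ← norm_neg]; simpa using hyA.1
end
end

section
/- Let f : ℝ^d → ℝ^d be measurable and locally bounded, and let G : ℝ^d → (subsets of ℝ^d) be a set-valued map with closed convex values and closed graph (upper semicontinuity) such that f(x) ∈ G(x) for Lebesgue-almost every x ∈ ℝ^d. Then F_f(x) ⊆ G(x) for every x ∈ ℝ^d. That is, F_f is the smallest closed-convex-valued upper semicontinuous set-valued map containing f(x) at almost every point. -/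
/-!
Outside the null set where `f y ∉ G y`, the values `f y` for `y` near `x` lie in a compact ball
and in `G y`; since the graph of `G` is closed, they eventually lie in every open neighbourhood of
`G x`, in particular in the convex open thickenings of `G x`. Hence every set in the intersection
defining `Filippov f x` can be chosen inside the closure of such a thickening, and intersecting
over the thickenings leaves the closed set `G x`.
-/

open MeasureTheory Filter Topology Metric Set
open scoped RealInnerProductSpace

noncomputable section

theorem eventually_mem_of_isClosed_graph {X Y : Type*}
    [TopologicalSpace X] [TopologicalSpace Y] {G : X → Set Y}
    (hG : IsClosed {p : X × Y | p.2 ∈ G p.1}) {f : X → Y} {l : Filter X} {x : X}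
    (hlx : l ≤ 𝓝 x) {K : Set Y} (hK : IsCompact K) (hfK : ∀ᶠ y in l, f y ∈ K)
    (hfG : ∀ᶠ y in l, f y ∈ G y) {U : Set Y} (hU : IsOpen U) (hGU : G x ⊆ U) :
    ∀ᶠ y in l, f y ∈ U := by
  by_contra hnot
  have : NeBot (l ⊓ 𝓟 {y | f y ∉ U}) := by
    rw [inf_principal_neBot_iff]
    exact fun s hs =>
      ((not_eventually.mp hnot).and_eventually hs).exists.imp fun y hy => ⟨hy.2, hy.1⟩
  let u := Ultrafilter.of (l ⊓ 𝓟 {y | f y ∉ U})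
  have hul : (u : Filter X) ≤ l := (Ultrafilter.of_le _).trans inf_le_left
  have huU : ∀ᶠ y in u, f y ∉ U :=
    le_principal_iff.mp ((Ultrafilter.of_le _).trans inf_le_right)
  -- a limit `w ∈ K` of `f` along an ultrafilter on the bad set lies in `G x` but not in `U`
  obtain ⟨w, -, hw⟩ := hK.ultrafilter_le_nhds (u.map f) (le_principal_iff.mpr (hul hfK))
  have hclosed : IsClosed {p : X × Y | p.2 ∈ G p.1 ∧ p.2 ∉ U} :=
    hG.inter (hU.isClosed_compl.preimage continuous_snd)
  have hxw : (x, w) ∈ {p : X × Y | p.2 ∈ G p.1 ∧ p.2 ∉ U} :=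
    hclosed.mem_of_tendsto ((tendsto_id'.mpr (hul.trans hlx)).prodMk_nhds hw)
      ((hfG.filter_mono hul).and huU)
  exact hxw.2 (hGU hxw.1)

theorem LocallyBounded.exists_eventually_mem_closedBall {d : ℕ} {f : Euc d → Euc d}
    (hf : LocallyBounded f) (x : Euc d) : ∃ C, ∀ᶠ y in 𝓝 x, f y ∈ closedBall 0 C := by
  obtain ⟨r, hr, C, hC⟩ := hf x
  refine ⟨C, eventually_of_mem (ball_mem_nhds x hr) fun y hy => ?_⟩
  simpa [dist_eq_norm] using hC y (by simpa [dist_eq_norm] using hy)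

theorem Filippov_subset_closure {d : ℕ} {f : Euc d → Euc d} {x : Euc d} {S U : Set (Euc d)}
    (hS : volume Sᶜ = 0) (hU : Convex ℝ U) (hfU : ∀ᶠ y in 𝓝[S] x, f y ∈ U) :
    Filippov f x ⊆ closure U := by
  obtain ⟨δ, hδ, hsub⟩ := mem_nhdsWithin_iff.mp hfU
  refine (iInter₂_subset_of_subset Sᶜ hS <| iInter₂_subset δ hδ).trans (closure_mono ?_)
  refine convexHull_min ?_ hU
  rintro _ ⟨y, ⟨hyx, hyS⟩, rfl⟩
  exact hsub ⟨by simpa [dist_eq_norm] using hyx, not_not.mp hyS⟩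

theorem stmt_3_general {d : ℕ} (f : Euc d → Euc d)
    (hf_bdd : LocallyBounded f) (G : Euc d → Set (Euc d))
    (hG_closed : ∀ x, IsClosed (G x)) (hG_convex : ∀ x, Convex ℝ (G x))
    (hG_graph : IsClosed {p : Euc d × Euc d | p.2 ∈ G p.1})
    (hfG : ∀ᵐ x ∂(volume : Measure (Euc d)), f x ∈ G x) :
    ∀ x, Filippov f x ⊆ G x := by
  intro x
  obtain ⟨C, hC⟩ := hf_bdd.exists_eventually_mem_closedBall x
  have hS : volume {y | f y ∈ G y}ᶜ = 0 := ae_iff.mp hfG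
  have hnear (ε : ℝ) (hε : 0 < ε) :
      ∀ᶠ y in 𝓝[{y | f y ∈ G y}] x, f y ∈ thickening ε (G x) :=
    eventually_mem_of_isClosed_graph hG_graph nhdsWithin_le_nhds (isCompact_closedBall 0 C)
      (nhdsWithin_le_nhds hC) self_mem_nhdsWithin isOpen_thickening (self_subset_thickening hε _)
  have hthick (ε : ℝ) (hε : 0 < ε) : Filippov f x ⊆ cthickening ε (G x) :=
    (Filippov_subset_closure hS ((hG_convex x).thickening ε) (hnear ε hε)).trans
      (closure_thickening_subset_cthickening ε _)
  rw [← (hG_closed x).closure_eq, closure_eq_iInter_cthickening]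
  exact subset_iInter₂ hthick

/-- `F_f` is the smallest closed-convex-valued u.s.c. map containing `f x`
at a.e. point. -/
theorem stmt_3 {d : ℕ} (f : Euc d → Euc d) (hf_meas : Measurable f)
    (hf_bdd : LocallyBounded f) (G : Euc d → Set (Euc d))
    (hG_closed : ∀ x, IsClosed (G x)) (hG_convex : ∀ x, Convex ℝ (G x))
    (hG_graph : IsClosed {p : Euc d × Euc d | p.2 ∈ G p.1})
    (hfG : ∀ᵐ x ∂(volume : Measure (Euc d)), f x ∈ G x) :
    ∀ x, Filippov f x ⊆ G x :=
  stmt_3_general f hf_bdd G hG_closed hG_convex hG_graph hfG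
end
end

section
/- Let f : ℝ^d → ℝ^d be measurable and locally bounded, and let x be a Lebesgue point of f, i.e., the average of ‖f(y) − f(x)‖ over the ball of radius r centered at x (with respect to Lebesgue measure) tends to 0 as r ↓ 0. Then f(x) ∈ F_f(x). -/
open MeasureTheory Filter Topology Metric Set
open scoped RealInnerProductSpace

noncomputable section

lemma avg_sub_bound {d : ℕ} (f : Euc d → Euc d) (x : Euc d) (r : ℝ) (hr : 0 < r)
    (hi : IntegrableOn f (ball x r)) :
    ‖(⨍ y in ball x r, f y ∂volume) - f x‖ ≤ ⨍ y in ball x r, ‖f y - f x‖ ∂volume := by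
  have h0 : volume (ball x r) ≠ 0 := (measure_ball_pos volume x hr).ne'
  have hfin : volume (ball x r) ≠ ⊤ := measure_ball_lt_top.ne
  have : (⨍ y in ball x r, f y ∂volume) - f x = ⨍ y in ball x r, (f y - f x) ∂volume := by
    rw [average_eq, average_eq, integral_sub hi (integrableOn_const measure_ball_lt_top.ne),
      smul_sub]
    congr 1
    rw [setIntegral_const, smul_smul, measureReal_restrict_apply_univ, inv_mul_cancel₀ (by
      simpa [Measure.real, ENNReal.toReal_eq_zero_iff, hfin] using h0), one_smul]
  rw [this, average_eq, average_eq, norm_smul]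
  simp only [norm_inv, Real.norm_eq_abs, abs_of_nonneg measureReal_nonneg, smul_eq_mul]
  exact mul_le_mul_of_nonneg_left (norm_integral_le_integral_norm _)
    (inv_nonneg.2 measureReal_nonneg)

/-- at every Lebesgue point `x` of `f`, `f x ∈ F_f x`. -/
theorem stmt_5 {d : ℕ} (f : Euc d → Euc d) (hf_meas : Measurable f)
    (hf_bdd : LocallyBounded f) (x : Euc d)
    (hx : Tendsto (fun r : ℝ => ⨍ y in Metric.ball x r, ‖f y - f x‖ ∂volume)
      (𝓝[>] 0) (𝓝 0)) :
    f x ∈ Filippov f x := by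
  simp only [Filippov, mem_iInter]
  intro N hN δ hδ
  obtain ⟨r0, hr0, C, hC⟩ := hf_bdd x
  set K := closure (convexHull ℝ (f '' {y | ‖y - x‖ < δ ∧ y ∉ N})) with hK
  have hKc : IsClosed K := isClosed_closure
  have hKconv : Convex ℝ K := (convex_convexHull ℝ _).closure
  have hint : ∀ r : ℝ, 0 < r → r ≤ r0 → IntegrableOn f (ball x r) := by
    intro r hr hrle
    refine Measure.integrableOn_of_bounded (M := C) measure_ball_lt_top.ne
      hf_meas.aestronglyMeasurable ?_
    filter_upwards [ae_restrict_mem measurableSet_ball] with y hy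
    exact hC y (by rw [← dist_eq_norm]; exact lt_of_lt_of_le (mem_ball.1 hy) hrle)
  have haeN : ∀ᵐ y ∂(volume : Measure (Euc d)), y ∉ N :=
    (ae_iff.2 (by simpa using hN))
  have hmem : ∀ r : ℝ, 0 < r → r ≤ min δ r0 → (⨍ y in ball x r, f y ∂volume) ∈ K := by
    intro r hr hrle
    refine hKconv.set_average_mem hKc (measure_ball_pos volume x hr).ne'
      measure_ball_lt_top.ne ?_ (hint r hr (hrle.trans (min_le_right _ _)))
    filter_upwards [ae_restrict_mem measurableSet_ball, ae_restrict_of_ae haeN] with y hy hyN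
    refine subset_closure (subset_convexHull ℝ _ ⟨y, ⟨?_, hyN⟩, rfl⟩)
    rw [← dist_eq_norm]
    exact lt_of_lt_of_le (mem_ball.1 hy) (hrle.trans (min_le_left _ _))
  have hev : ∀ᶠ r in 𝓝[>] (0:ℝ), 0 < r ∧ r ≤ min δ r0 := by
    filter_upwards [Ioc_mem_nhdsGT_of_mem ⟨le_refl 0, lt_min hδ hr0⟩] with r hr
    exact ⟨hr.1, hr.2⟩
  have htend : Tendsto (fun r : ℝ => ⨍ y in ball x r, f y ∂volume) (𝓝[>] 0) (𝓝 (f x)) := by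
    rw [tendsto_iff_norm_sub_tendsto_zero]
    refine squeeze_zero' (by filter_upwards with r using norm_nonneg _) ?_ hx
    filter_upwards [hev] with r hr
    exact avg_sub_bound f x r hr.1 (hint r hr.1 (hr.2.trans (min_le_right _ _)))
  exact hKc.mem_of_tendsto htend (by filter_upwards [hev] with r hr using hmem r hr.1 hr.2)
end
end

section
/- Let f : ℝ^d → ℝ^d be measurable and locally bounded. Then for every x ∈ ℝ^d, the set F_f(x) is nonempty, compact, and convex. -/
open MeasureTheory Filter Topology Metric Set
open scoped RealInnerProductSpace

noncomputable section

/-- `F_f x` is nonempty, compact and convex for every `x`. -/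
theorem stmt_6 {d : ℕ} (f : Euc d → Euc d) (hf_meas : Measurable f)
    (hf_bdd : LocallyBounded f) (x : Euc d) :
    (Filippov f x).Nonempty ∧ IsCompact (Filippov f x) ∧ Convex ℝ (Filippov f x) := by
  obtain ⟨r, hr, C, hC⟩ := hf_bdd x
  set T : Set (Euc d) → ℝ → Set (Euc d) := fun N δ =>
    closure (convexHull ℝ (f '' {y | ‖y - x‖ < δ ∧ y ∉ N})) with hT
  -- monotonicity
  have hmono : ∀ (N₁ N₂ : Set (Euc d)) (δ₁ δ₂ : ℝ), N₁ ⊆ N₂ → δ₂ ≤ δ₁ →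
      T N₂ δ₂ ⊆ T N₁ δ₁ := by
    intro N₁ N₂ δ₁ δ₂ hN hδ
    apply closure_mono
    apply convexHull_mono
    apply image_mono
    rintro y ⟨h1, h2⟩
    exact ⟨lt_of_lt_of_le h1 hδ, fun h => h2 (hN h)⟩
  -- ball bound
  have hball : ∀ (N : Set (Euc d)) (δ : ℝ), δ ≤ r → T N δ ⊆ Metric.closedBall 0 C := by
    intro N δ hδ
    have h1 : f '' {y | ‖y - x‖ < δ ∧ y ∉ N} ⊆ Metric.closedBall 0 C := by
      rintro _ ⟨y, ⟨hy, _⟩, rfl⟩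
      simpa [Metric.mem_closedBall, dist_eq_norm] using hC y (lt_of_lt_of_le hy hδ)
    exact closure_minimal (convexHull_min h1 (convex_closedBall _ _)) Metric.isClosed_closedBall
  -- nonemptiness of each term
  have hne : ∀ (N : Set (Euc d)), volume N = 0 → ∀ δ : ℝ, 0 < δ → (T N δ).Nonempty := by
    intro N hN δ hδ
    have hpos := Metric.measure_ball_pos volume x hδ
    have hnsub : ¬ (Metric.ball x δ ⊆ N) := by
      intro h
      exact hpos.ne' (le_antisymm ((measure_mono h).trans hN.le) (zero_le))
    obtain ⟨y, hy, hyN⟩ := not_subset.mp hnsub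
    exact ⟨f y, subset_closure (subset_convexHull ℝ _
      ⟨y, ⟨by simpa [Metric.mem_ball, dist_eq_norm] using hy, hyN⟩, rfl⟩)⟩
  -- index type
  let ι := {p : Set (Euc d) × ℝ // volume p.1 = 0 ∧ 0 < p.2}
  haveI : Nonempty ι := ⟨⟨(∅, 1), by simp, one_pos⟩⟩
  let S : ι → Set (Euc d) := fun p => T p.1.1 (min p.1.2 r)
  have hFil : Filippov f x = ⋂ p : ι, S p := by
    apply Set.Subset.antisymm
    · intro z hz
      rw [Set.mem_iInter]
      rintro ⟨⟨N, δ⟩, hN, hδ⟩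
      simp only [Filippov, Set.mem_iInter] at hz
      exact hz N hN (min δ r) (lt_min hδ hr)
    · intro z hz
      simp only [Filippov, Set.mem_iInter]
      intro N hN δ hδ
      rw [Set.mem_iInter] at hz
      exact hmono N N δ (min δ r) subset_rfl (min_le_left _ _) (hz ⟨(N, δ), hN, hδ⟩)
  have hScompact : ∀ p : ι, IsCompact (S p) := fun p =>
    IsCompact.of_isClosed_subset (isCompact_closedBall 0 C) isClosed_closure
      (hball _ _ (min_le_right _ _))
  have hSne : ∀ p : ι, (S p).Nonempty := fun p =>
    hne p.1.1 p.2.1 _ (lt_min p.2.2 hr)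
  have hdir : Directed (· ⊇ ·) S := by
    rintro ⟨⟨N₁, δ₁⟩, hN₁, hδ₁⟩ ⟨⟨N₂, δ₂⟩, hN₂, hδ₂⟩
    refine ⟨⟨(N₁ ∪ N₂, min δ₁ δ₂), measure_union_null hN₁ hN₂, lt_min hδ₁ hδ₂⟩, ?_, ?_⟩
    · exact hmono N₁ (N₁ ∪ N₂) (min δ₁ r) (min (min δ₁ δ₂) r) Set.subset_union_left
        (min_le_min (min_le_left _ _) le_rfl)
    · exact hmono N₂ (N₁ ∪ N₂) (min δ₂ r) (min (min δ₁ δ₂) r) Set.subset_union_right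
        (min_le_min (min_le_right _ _) le_rfl)
  refine ⟨?_, ?_, ?_⟩
  · rw [hFil]
    exact IsCompact.nonempty_iInter_of_directed_nonempty_isCompact_isClosed S hdir hSne
      hScompact (fun _ => isClosed_closure)
  · rw [hFil]
    exact IsCompact.of_isClosed_subset (hScompact ⟨(∅, 1), by simp, one_pos⟩)
      (isClosed_iInter fun _ => isClosed_closure)
      (Set.iInter_subset _ _)
  · apply convex_iInter; intro N
    apply convex_iInter; intro _
    apply convex_iInter; intro δ
    apply convex_iInter; intro _
    exact (convex_convexHull ℝ _).closure
end
end

section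
/- Let f : ℝ^d → ℝ^d be measurable and locally bounded. Then the graph {(x, z) ∈ ℝ^d × ℝ^d : z ∈ F_f(x)} of the Filippov set-valued map F_f is a closed subset of ℝ^d × ℝ^d (i.e., F_f is upper semicontinuous). -/
open MeasureTheory Filter Topology Metric Set
open scoped RealInnerProductSpace

noncomputable section

/-!
Fix a null set `N`. If `(xₙ, zₙ) → (x, z)` with `zₙ` in the closed convex hull of `f` over
`B(xₙ, δ/2) \ N`, then eventually `B(xₙ, δ/2) ⊆ B(x, δ)`, so `z` lies in the closed convex hull
of `f` over `B(x, δ) \ N`. Hence each `x ↦ ⋂_δ closure (conv f(B(x, δ) \ N))` has closed graph,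
and so does their intersection over `N`, the Filippov map.
-/

theorem isClosed_setOf_mem_iInter_closure_ball {X E : Type*} [PseudoMetricSpace X]
    [TopologicalSpace E] (T : Set X → Set E) (hT : Monotone T) :
    IsClosed {p : X × E | p.2 ∈ ⋂ (δ : ℝ) (_ : 0 < δ), closure (T (ball p.1 δ))} := by
  refine isClosed_of_closure_subset fun p hp => ?_
  simp only [mem_ofPred_eq, mem_iInter₂]
  intro δ hδ
  refine mem_closure_iff.2 fun V hV hpV => ?_
  have hnhds : ball p.1 (δ / 2) ×ˢ V ∈ 𝓝 p :=
    prod_mem_nhds (ball_mem_nhds _ (half_pos hδ)) (hV.mem_nhds hpV)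
  obtain ⟨q, ⟨hq₁, hqV⟩, hq⟩ := mem_closure_iff_nhds.1 hp _ hnhds
  have hball : ball q.1 (δ / 2) ⊆ ball p.1 δ := by
    refine ball_subset_ball' ?_
    rw [mem_ball] at hq₁
    linarith
  have hqT : q.2 ∈ closure (T (ball p.1 δ)) :=
    closure_mono (hT hball) (mem_iInter₂.1 hq (δ / 2) (half_pos hδ))
  exact mem_closure_iff.1 hqT V hV hqV

theorem stmt_7_general {d : ℕ} (f : Euc d → Euc d) :
    IsClosed {p : Euc d × Euc d | p.2 ∈ Filippov f p.1} := by
  have hclosed (N : Set (Euc d)) := isClosed_setOf_mem_iInter_closure_ball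
    (fun s => convexHull ℝ (f '' (s \ N)))
    (fun _ _ hst => convexHull_mono (image_mono (sdiff_subset_sdiff_left hst)))
  convert isClosed_iInter fun N => isClosed_iInter fun (_ : volume N = 0) => hclosed N using 1
  ext p
  simp only [Filippov, mem_ofPred_eq, mem_iInter]
  -- `ball x δ \ N` unfolds to `{y | ‖y - x‖ < δ ∧ y ∉ N}`
  rfl

/-- the graph of `F_f` is closed (upper semicontinuity). -/
theorem stmt_7 {d : ℕ} (f : Euc d → Euc d) (hf_meas : Measurable f)
    (hf_bdd : LocallyBounded f) :
    IsClosed {p : Euc d × Euc d | p.2 ∈ Filippov f p.1} :=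
  stmt_7_general f
end
end

section
/- On a probability space with filtration (F_n), let x(n) be F_n-measurable ℝ^d-valued random variables with sup_n ‖x(n)‖ < ∞ almost surely, let (M(n)) be an ℝ^d-valued martingale difference sequence (E[M(n+1) | F_n] = 0) with E[‖M(n+1)‖² | F_n] ≤ K(1 + ‖x(n)‖²) for some K > 0, and let a(n) ≥ 0 satisfy ∑_n a(n)² < ∞. Let g : ℝ^d → ℝ^d be a bounded measurable map. Then the martingale ξ(n) := ∑_{m=0}^{n−1} a(m) ⟨g(x(m)), M(m+1)⟩ converges almost surely as n → ∞. -/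
open MeasureTheory Filter Topology Metric Set
open scoped RealInnerProductSpace
open scoped NNReal ENNReal

noncomputable section

lemma coord_abs_le {d : ℕ} (x : Euc d) (i : Fin d) : |x i| ≤ ‖x‖ := by
  rw [EuclideanSpace.norm_eq, ← Real.sqrt_sq_eq_abs]
  refine Real.sqrt_le_sqrt ?_
  have h := Finset.single_le_sum (f := fun j => ‖x j‖ ^ 2)
    (fun j _ => by positivity) (Finset.mem_univ i)
  simpa [Real.norm_eq_abs, sq_abs] using h

lemma aux_conv {d : ℕ} {Ω : Type*} {m0 : MeasurableSpace Ω} (P : Measure Ω)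
    [IsProbabilityMeasure P] (ℱ : Filtration ℕ m0)
    (x M : ℕ → Ω → Euc d) (a : ℕ → ℝ) (K : ℝ) (hK : 0 < K)
    (hx_adapted : ∀ n, StronglyMeasurable[ℱ n] (x n))
    (hM_adapted : ∀ n, StronglyMeasurable[ℱ (n + 1)] (M (n + 1)))
    (hM_sq : ∀ n, MemLp (M (n + 1)) 2 P)
    (hM_mds : ∀ n, P[M (n + 1) | ℱ n] =ᵐ[P] 0)
    (hM_bound : ∀ n, ∀ᵐ ω ∂P,
      (P[fun ω' => ‖M (n + 1) ω'‖ ^ 2 | ℱ n]) ω ≤ K * (1 + ‖x n ω‖ ^ 2))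
    (ha_nonneg : ∀ n, 0 ≤ a n) (ha_sq : Summable fun n => (a n) ^ 2)
    (g : Euc d → Euc d) (hg_meas : Measurable g) (hg_bdd : ∃ C, ∀ v, ‖g v‖ ≤ C)
    (R : ℝ) :
    ∀ᵐ ω ∂P, (∀ n, ‖x n ω‖ ≤ R) → ∃ c : ℝ,
      Tendsto (fun n => ∑ m ∈ Finset.range n, a m * ⟪g (x m ω), M (m + 1) ω⟫)
        atTop (𝓝 c) := by
  classical
  obtain ⟨Cg, hCg⟩ := hg_bdd
  have hCg0 : 0 ≤ Cg := le_trans (norm_nonneg _) (hCg 0)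
  -- the stopped region
  set A : ℕ → Set Ω := fun m => {ω | ∀ k ≤ m, ‖x k ω‖ ≤ R} with hA
  have hA_meas : ∀ m, MeasurableSet[ℱ m] (A m) := by
    intro m
    have : A m = ⋂ k ∈ Finset.range (m + 1), {ω | ‖x k ω‖ ≤ R} := by
      ext ω; simp [hA, Nat.lt_succ_iff]
    rw [this]
    refine MeasurableSet.biInter (Finset.range (m+1)).countable_toSet (fun k hk => ?_)
    have hk' : k ≤ m := Nat.lt_succ_iff.mp (Finset.mem_range.mp hk)
    exact (ℱ.mono hk') _ (measurableSet_le ((hx_adapted k).norm.measurable) measurable_const)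
  -- integrability of M coordinates etc.
  have hM_int : ∀ m, Integrable (M (m + 1)) P := fun m => (hM_sq m).integrable one_le_two
  -- stopped integrand
  set h : ℕ → Ω → Euc d := fun m => (A m).indicator (fun ω => a m • g (x m ω)) with hh
  have hh_sm : ∀ m, StronglyMeasurable[ℱ m] (h m) := by
    intro m
    exact StronglyMeasurable.indicator
      (((hg_meas.comp (hx_adapted m).measurable).stronglyMeasurable).const_smul (a m))
      (hA_meas m)
  have hh_bound : ∀ m ω, ‖h m ω‖ ≤ a m * Cg := by
    intro m ω
    by_cases hω : ω ∈ A m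
    · simp only [hh, Set.indicator_of_mem hω, norm_smul, Real.norm_eq_abs,
        abs_of_nonneg (ha_nonneg m)]
      exact mul_le_mul_of_nonneg_left (hCg _) (ha_nonneg m)
    · simp only [hh, Set.indicator_of_notMem hω, norm_zero]
      exact mul_nonneg (ha_nonneg m) hCg0
  set Y : ℕ → Ω → ℝ := fun m ω => ⟪h m ω, M (m + 1) ω⟫ with hY
  have hY_sm : ∀ m, StronglyMeasurable[ℱ (m + 1)] (Y m) := fun m =>
    ((hh_sm m).mono (ℱ.mono m.le_succ)).inner (hM_adapted m)
  have hY_abs : ∀ m ω, |Y m ω| ≤ (a m * Cg) * ‖M (m + 1) ω‖ := by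
    intro m ω
    refine (abs_real_inner_le_norm _ _).trans ?_
    exact mul_le_mul_of_nonneg_right (hh_bound m ω) (norm_nonneg _)
  have hY_L2 : ∀ m, MemLp (Y m) 2 P := by
    intro m
    refine MemLp.of_le_mul (c := a m * Cg) (hM_sq m).norm
      (((hY_sm m).mono (ℱ.le _)).aestronglyMeasurable) ?_
    filter_upwards with ω
    simpa [Real.norm_eq_abs, abs_norm] using hY_abs m ω
  have hY_int : ∀ m, Integrable (Y m) P := fun m => (hY_L2 m).integrable one_le_two
  -- conditional expectation of coordinates of M is zero
  have hMi : ∀ m (i : Fin d), P[(fun ω => M (m + 1) ω i) | ℱ m] =ᵐ[P] 0 := by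
    intro m i
    have hint : Integrable (fun ω => M (m + 1) ω i) P :=
      ((EuclideanSpace.proj i : Euc d →L[ℝ] ℝ)).integrable_comp (hM_int m)
    refine (ae_eq_condExp_of_forall_setIntegral_eq (ℱ.le m) hint
      (fun s _ _ => (integrable_zero _ _ _).integrableOn)
      (fun s hs hμs => ?_) stronglyMeasurable_zero.aestronglyMeasurable).symm
    have h1 : ∫ ω in s, M (m + 1) ω ∂P = 0 := by
      rw [← setIntegral_condExp (ℱ.le m) (hM_int m) hs]
      rw [setIntegral_congr_ae (((ℱ.le m) s hs)) ((hM_mds m).mono (fun ω hω _ => hω))]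
      simp
    have h2 := ((EuclideanSpace.proj i : Euc d →L[ℝ] ℝ)).integral_comp_comm
      ((hM_int m).restrict (s := s))
    simp only [h1, map_zero] at h2
    simpa using h2.symm
  -- conditional expectation of the increments is zero
  have hY_cond : ∀ m, P[Y m | ℱ m] =ᵐ[P] 0 := by
    intro m
    have hYeq : Y m = ∑ i : Fin d, (fun ω => h m ω i * M (m + 1) ω i) := by
      funext ω
      simp [hY, PiLp.inner_apply, RCLike.inner_apply, conj_trivial, Finset.sum_apply]
      exact Finset.sum_congr rfl (fun _ _ => mul_comm _ _)
    rw [hYeq]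
    have hsum := condExp_finset_sum (μ := P) (m := ℱ m) (s := Finset.univ)
      (f := fun (i : Fin d) (ω : Ω) => h m ω i * M (m + 1) ω i) ?hint
    case hint =>
      intro i _
      refine Integrable.bdd_mul (c := a m * Cg)
        (((EuclideanSpace.proj i : Euc d →L[ℝ] ℝ)).integrable_comp (hM_int m))
        ?_ ?_
      · exact ((EuclideanSpace.proj i : Euc d →L[ℝ] ℝ).continuous.comp_stronglyMeasurable
          ((hh_sm m).mono (ℱ.le m))).aestronglyMeasurable
      · filter_upwards with ω
        exact (coord_abs_le (h m ω) i).trans (hh_bound m ω) |>.trans_eq' (by rw [Real.norm_eq_abs])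
    refine hsum.trans ?_
    have : ∀ i : Fin d,
        P[(fun ω => h m ω i * M (m + 1) ω i) | ℱ m] =ᵐ[P] 0 := by
      intro i
      have hpull := condExp_stronglyMeasurable_mul_of_bound (ℱ.le m)
        ((EuclideanSpace.proj i : Euc d →L[ℝ] ℝ).continuous.comp_stronglyMeasurable (hh_sm m))
        (((EuclideanSpace.proj i : Euc d →L[ℝ] ℝ)).integrable_comp (hM_int m)) (a m * Cg) ?bd
      case bd =>
        filter_upwards with ω
        rw [Real.norm_eq_abs]
        exact (coord_abs_le (h m ω) i).trans (hh_bound m ω)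
      refine hpull.trans ?_
      filter_upwards [hMi m i] with ω hω
      simp [hω]
    have hall : ∀ᵐ ω ∂P, ∀ i : Fin d,
        (P[(fun ω => h m ω i * M (m + 1) ω i) | ℱ m]) ω = 0 :=
      ae_all_iff.2 (fun i => this i)
    filter_upwards [hall] with ω hω
    simp [Finset.sum_apply, hω]

  -- the partial-sum process
  set S : ℕ → Ω → ℝ := fun n ω => ∑ m ∈ Finset.range n, Y m ω with hS
  have hS_adapted : StronglyAdapted ℱ S := by
    intro n
    have : StronglyMeasurable[ℱ n] (fun ω => ∑ m ∈ Finset.range n, Y m ω) := by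
      refine Finset.stronglyMeasurable_fun_sum _ (fun m hm => ?_)
      exact (hY_sm m).mono (ℱ.mono (Finset.mem_range.mp hm))
    exact this
  have hS_int : ∀ n, Integrable (S n) P := fun n =>
    integrable_finset_sum _ (fun m _ => hY_int m)
  have hS_L2 : ∀ n, MemLp (S n) 2 P := fun n =>
    memLp_finset_sum _ (fun m _ => hY_L2 m)
  have hmart : Martingale S ℱ P := by
    refine martingale_of_condExp_sub_eq_zero_nat hS_adapted hS_int (fun n => ?_)
    have hd : S (n + 1) - S n = Y n := by
      funext ω; simp [hS, Finset.sum_range_succ]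
    rw [hd]; exact hY_cond n
  -- cross terms vanish
  have hSY_int : ∀ n, Integrable (fun ω => S n ω * Y n ω) P := by
    intro n
    have hsmul := (hY_L2 n).smul (hS_L2 n) (p := 2) (q := 2) (r := 1)
    rw [memLp_one_iff_integrable] at hsmul
    exact hsmul
  have hcross : ∀ n, ∫ ω, S n ω * Y n ω ∂P = 0 := by
    intro n
    have hpull := condExp_mul_of_stronglyMeasurable_left (hS_adapted n) (hSY_int n) (hY_int n)
    have h0 : P[(fun ω => S n ω * Y n ω) | ℱ n] =ᵐ[P] 0 := by
      refine hpull.trans ?_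
      filter_upwards [hY_cond n] with ω hω
      simp only [Pi.mul_apply, hω, Pi.zero_apply, mul_zero]
    calc ∫ ω, S n ω * Y n ω ∂P
        = ∫ ω, (P[(fun ω => S n ω * Y n ω) | ℱ n]) ω ∂P :=
          (integral_condExp (ℱ.le n)).symm
      _ = 0 := by rw [integral_congr_ae h0]; simp
  -- second moments of the increments
  set D : ℝ := Cg ^ 2 * (K * (1 + R ^ 2)) with hD
  have hD0 : 0 ≤ D := by positivity
  have hW_int : ∀ m, Integrable (fun ω => ‖M (m + 1) ω‖ ^ 2) P := fun m =>
    (hM_sq m).norm.integrable_sq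
  have hYsq_int : ∀ m, Integrable (fun ω => Y m ω ^ 2) P := fun m =>
    (hY_L2 m).integrable_sq
  have hYsq : ∀ m, ∫ ω, Y m ω ^ 2 ∂P ≤ a m ^ 2 * D := by
    intro m
    set f1 : Ω → ℝ := Set.indicator (A m) (fun _ => (1 : ℝ)) with hf1
    have hf1_sm : StronglyMeasurable[ℱ m] f1 :=
      stronglyMeasurable_const.indicator (hA_meas m)
    have hf1W_int : Integrable (fun ω => f1 ω * ‖M (m + 1) ω‖ ^ 2) P := by
      refine Integrable.bdd_mul (c := 1) (hW_int m)
        ((hf1_sm.mono (ℱ.le m)).aestronglyMeasurable) ?_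
      filter_upwards with ω
      by_cases hω : ω ∈ A m <;> simp [hf1, hω]
    have hpt : ∀ ω, Y m ω ^ 2 ≤ (a m * Cg) ^ 2 * (f1 ω * ‖M (m + 1) ω‖ ^ 2) := by
      intro ω
      by_cases hω : ω ∈ A m
      · have h1 : |Y m ω| ≤ (a m * Cg) * ‖M (m + 1) ω‖ := hY_abs m ω
        have := mul_self_le_mul_self (abs_nonneg _) h1
        simp only [hf1, Set.indicator_of_mem hω, one_mul]
        calc Y m ω ^ 2 = |Y m ω| * |Y m ω| := by rw [abs_mul_abs_self, sq]
          _ ≤ ((a m * Cg) * ‖M (m + 1) ω‖) * ((a m * Cg) * ‖M (m + 1) ω‖) := this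
          _ = (a m * Cg) ^ 2 * ‖M (m + 1) ω‖ ^ 2 := by ring
      · have hzero : Y m ω = 0 := by
          simp [hY, hh, Set.indicator_of_notMem hω]
        simp [hzero, hf1, Set.indicator_of_notMem hω]
    have hstep : ∫ ω, f1 ω * ‖M (m + 1) ω‖ ^ 2 ∂P ≤ K * (1 + R ^ 2) := by
      have hpull := condExp_stronglyMeasurable_mul_of_bound (ℱ.le m) hf1_sm (hW_int m) 1
        (by filter_upwards with ω; by_cases hω : ω ∈ A m <;> simp [hf1, hω])
      have hcexp_int : Integrable (fun ω => f1 ω * (P[fun ω' => ‖M (m + 1) ω'‖ ^ 2 | ℱ m]) ω) P := by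
        refine Integrable.bdd_mul (c := 1) integrable_condExp
          ((hf1_sm.mono (ℱ.le m)).aestronglyMeasurable) ?_
        filter_upwards with ω
        by_cases hω : ω ∈ A m <;> simp [hf1, hω]
      calc ∫ ω, f1 ω * ‖M (m + 1) ω‖ ^ 2 ∂P
          = ∫ ω, (P[(fun ω => f1 ω * ‖M (m + 1) ω‖ ^ 2) | ℱ m]) ω ∂P :=
            (integral_condExp (ℱ.le m)).symm
        _ = ∫ ω, f1 ω * (P[fun ω' => ‖M (m + 1) ω'‖ ^ 2 | ℱ m]) ω ∂P := by
            refine integral_congr_ae (hpull.mono (fun ω hω => ?_))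
            exact hω
        _ ≤ ∫ _ω, K * (1 + R ^ 2) ∂P := by
            refine integral_mono_ae hcexp_int (integrable_const _) ?_
            filter_upwards [hM_bound m] with ω hω
            by_cases hmem : ω ∈ A m
            · have hxR : ‖x m ω‖ ≤ R := hmem m le_rfl
              have hR0 : (0:ℝ) ≤ R := le_trans (norm_nonneg _) hxR
              have : ‖x m ω‖ ^ 2 ≤ R ^ 2 := by
                exact pow_le_pow_left₀ (norm_nonneg _) hxR 2
              have hle : (P[fun ω' => ‖M (m + 1) ω'‖ ^ 2 | ℱ m]) ω ≤ K * (1 + R ^ 2) :=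
                hω.trans (by nlinarith)
              simpa [hf1, Set.indicator_of_mem hmem] using hle
            · simp only [hf1, Set.indicator_of_notMem hmem, zero_mul]
              positivity
        _ = K * (1 + R ^ 2) := by simp
    calc ∫ ω, Y m ω ^ 2 ∂P
        ≤ ∫ ω, (a m * Cg) ^ 2 * (f1 ω * ‖M (m + 1) ω‖ ^ 2) ∂P := by
          refine integral_mono (hYsq_int m) (hf1W_int.const_mul _) hpt
      _ = (a m * Cg) ^ 2 * ∫ ω, f1 ω * ‖M (m + 1) ω‖ ^ 2 ∂P := integral_const_mul _ _
      _ ≤ (a m * Cg) ^ 2 * (K * (1 + R ^ 2)) := by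
          refine mul_le_mul_of_nonneg_left hstep (by positivity)
      _ = a m ^ 2 * D := by rw [hD]; ring
  -- L² bound on the partial sums
  set T : ℝ := (∑' m, a m ^ 2) * D with hT
  have hT0 : 0 ≤ T := mul_nonneg (tsum_nonneg (fun m => sq_nonneg _)) hD0
  have hSsq : ∀ n, ∫ ω, S n ω ^ 2 ∂P ≤ T := by
    intro n
    have hrec : ∫ ω, S n ω ^ 2 ∂P ≤ ∑ m ∈ Finset.range n, a m ^ 2 * D := by
      induction n with
      | zero => simp [hS]
      | succ n ih =>
        have hexp : ∀ ω, S (n + 1) ω ^ 2 =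
            S n ω ^ 2 + (2 * (S n ω * Y n ω) + Y n ω ^ 2) := by
          intro ω
          simp only [hS, Finset.sum_range_succ]
          ring
        have hint2 : Integrable (fun ω => 2 * (S n ω * Y n ω) + Y n ω ^ 2) P :=
          ((hSY_int n).const_mul 2).add (hYsq_int n)
        calc ∫ ω, S (n + 1) ω ^ 2 ∂P
            = ∫ ω, (S n ω ^ 2 + (2 * (S n ω * Y n ω) + Y n ω ^ 2)) ∂P := by
              refine integral_congr_ae (Eventually.of_forall (fun ω => hexp ω))
          _ = (∫ ω, S n ω ^ 2 ∂P) + ∫ ω, (2 * (S n ω * Y n ω) + Y n ω ^ 2) ∂P :=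
              integral_add ((hS_L2 n).integrable_sq) hint2
          _ = (∫ ω, S n ω ^ 2 ∂P) +
              (2 * ∫ ω, S n ω * Y n ω ∂P + ∫ ω, Y n ω ^ 2 ∂P) := by
              rw [integral_add ((hSY_int n).const_mul 2) (hYsq_int n), integral_const_mul]
          _ = (∫ ω, S n ω ^ 2 ∂P) + ∫ ω, Y n ω ^ 2 ∂P := by rw [hcross n]; ring
          _ ≤ (∑ m ∈ Finset.range n, a m ^ 2 * D) + a n ^ 2 * D :=
              add_le_add ih (hYsq n)
          _ = ∑ m ∈ Finset.range (n + 1), a m ^ 2 * D := (Finset.sum_range_succ _ _).symm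
    refine hrec.trans ?_
    rw [hT, ← Finset.sum_mul]
    refine mul_le_mul_of_nonneg_right ?_ hD0
    exact Summable.sum_le_tsum _ (fun m _ => sq_nonneg _) ha_sq
  -- uniform L¹ bound
  set R' : ℝ≥0 := Real.toNNReal (Real.sqrt T) with hR'
  have hbdd : ∀ n, eLpNorm (S n) 1 P ≤ (R' : ℝ≥0∞) := by
    intro n
    refine (eLpNorm_le_eLpNorm_of_exponent_le (p := 1) (q := 2) (by norm_num) (hS_L2 n).aestronglyMeasurable).trans ?_
    rw [(hS_L2 n).eLpNorm_eq_integral_rpow_norm two_ne_zero ENNReal.ofNat_ne_top]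
    have htoReal : (2 : ℝ≥0∞).toReal = 2 := by simp
    have hnorm_eq : ∫ ω, ‖S n ω‖ ^ (2 : ℝ≥0∞).toReal ∂P = ∫ ω, S n ω ^ 2 ∂P := by
      refine integral_congr_ae (Eventually.of_forall (fun ω => ?_))
      rw [htoReal]
      show ‖S n ω‖ ^ (2:ℝ) = S n ω ^ 2
      rw [show ((2:ℝ)) = ((2:ℕ):ℝ) by norm_num, Real.rpow_natCast, Real.norm_eq_abs, sq_abs]
    rw [hnorm_eq]
    have hsqle : (∫ ω, S n ω ^ 2 ∂P) ^ (2 : ℝ≥0∞).toReal⁻¹ ≤ Real.sqrt T := by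
      rw [htoReal, Real.sqrt_eq_rpow]
      have hint_nonneg : 0 ≤ ∫ ω, S n ω ^ 2 ∂P :=
        integral_nonneg (fun ω => sq_nonneg _)
      rw [show ((2:ℝ))⁻¹ = 1/2 by norm_num]
      exact Real.rpow_le_rpow hint_nonneg (hSsq n) (by norm_num)
    calc ENNReal.ofReal ((∫ ω, S n ω ^ 2 ∂P) ^ (2 : ℝ≥0∞).toReal⁻¹)
        ≤ ENNReal.ofReal (Real.sqrt T) := ENNReal.ofReal_le_ofReal hsqle
      _ = (R' : ℝ≥0∞) := rfl
  -- almost sure convergence of the stopped process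
  have hconv := hmart.submartingale.ae_tendsto_limitProcess hbdd
  filter_upwards [hconv] with ω hω hbnd
  refine ⟨ℱ.limitProcess S P ω, ?_⟩
  have hmem : ∀ m, ω ∈ A m := fun m k _ => hbnd k
  have heq : ∀ n, S n ω = ∑ m ∈ Finset.range n, a m * ⟪g (x m ω), M (m + 1) ω⟫ := by
    intro n
    refine Finset.sum_congr rfl (fun m _ => ?_)
    rw [hY, hh]
    simp only [Set.indicator_of_mem (hmem m)]
    exact real_inner_smul_left _ _ _
  have : (fun n => ∑ m ∈ Finset.range n, a m * ⟪g (x m ω), M (m + 1) ω⟫)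
      = fun n => S n ω := by
    funext n; exact (heq n).symm
  rw [this]
  exact hω

/-- a.s. convergence of the martingale
`ξ(n) = ∑_{m<n} a(m) ⟨g(x(m)), M(m+1)⟩` under square-summable steps, a.s. bounded
iterates and the conditional second-moment bound on the martingale differences. -/
theorem stmt_10 {d : ℕ} {Ω : Type*} {m0 : MeasurableSpace Ω} (P : Measure Ω)
    [IsProbabilityMeasure P] (ℱ : Filtration ℕ m0)
    (x M : ℕ → Ω → Euc d) (a : ℕ → ℝ) (K : ℝ) (hK : 0 < K)
    (hx_adapted : ∀ n, StronglyMeasurable[ℱ n] (x n))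
    (hx_bdd : ∀ᵐ ω ∂P, ∃ C : ℝ, ∀ n, ‖x n ω‖ ≤ C)
    (hM_adapted : ∀ n, StronglyMeasurable[ℱ (n + 1)] (M (n + 1)))
    (hM_sq : ∀ n, MemLp (M (n + 1)) 2 P)
    (hM_mds : ∀ n, P[M (n + 1) | ℱ n] =ᵐ[P] 0)
    (hM_bound : ∀ n, ∀ᵐ ω ∂P,
      (P[fun ω' => ‖M (n + 1) ω'‖ ^ 2 | ℱ n]) ω ≤ K * (1 + ‖x n ω‖ ^ 2))
    (ha_nonneg : ∀ n, 0 ≤ a n) (ha_sq : Summable fun n => (a n) ^ 2)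
    (g : Euc d → Euc d) (hg_meas : Measurable g) (hg_bdd : ∃ C, ∀ v, ‖g v‖ ≤ C) :
    ∀ᵐ ω ∂P, ∃ c : ℝ,
      Tendsto (fun n => ∑ m ∈ Finset.range n, a m * ⟪g (x m ω), M (m + 1) ω⟫)
        atTop (𝓝 c) := by
  have key : ∀ R : ℕ, ∀ᵐ ω ∂P, (∀ n, ‖x n ω‖ ≤ (R : ℝ)) → ∃ c : ℝ,
      Tendsto (fun n => ∑ m ∈ Finset.range n, a m * ⟪g (x m ω), M (m + 1) ω⟫)
        atTop (𝓝 c) := fun R =>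
    aux_conv P ℱ x M a K hK hx_adapted hM_adapted hM_sq hM_mds hM_bound
      ha_nonneg ha_sq g hg_meas hg_bdd (R : ℝ)
  filter_upwards [hx_bdd, ae_all_iff.2 key] with ω hC hω
  obtain ⟨C, hC⟩ := hC
  exact hω ⌈max C 0⌉₊ (fun n => (hC n).trans ((le_max_left C 0).trans (Nat.le_ceil _)))
end
end

section
/- Under the stochastic approximation setup with h : ℝ^d → ℝ^d measurable and locally bounded, suppose the law of (x(n), M(n+1)) is absolutely continuous with respect to Lebesgue measure on ℝ^{2d} for every n, and let h̃ : ℝ^d → ℝ^d be measurable with h̃ = h Lebesgue-almost everywhere. Define x̃(0) := x(0) and x̃(n+1) := x̃(n) + a(n)(h̃(x̃(n)) + M(n+1)). Then almost surely x̃(n) = x(n) for all n ≥ 0. -/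
open MeasureTheory Filter Topology Metric Set
open scoped RealInnerProductSpace

noncomputable section

/-- if the laws of `(x(n), M(n+1))` are absolutely continuous w.r.t.
Lebesgue measure and `h̃ = h` Lebesgue-a.e., then the iteration driven by `h̃`
(started at `x(0)`) coincides with the original iteration almost surely. -/
theorem stmt_11 {d : ℕ} {Ω : Type*} {m0 : MeasurableSpace Ω} (P : Measure Ω)
    [IsProbabilityMeasure P] (ℱ : Filtration ℕ m0)
    (h : Euc d → Euc d) (hh_meas : Measurable h) (hh_bdd : LocallyBounded h)
    (x M : ℕ → Ω → Euc d) (a : ℕ → ℝ) (K : ℝ) (hK : 0 < K)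
    (hx_adapted : ∀ n, StronglyMeasurable[ℱ n] (x n))
    (hM_adapted : ∀ n, StronglyMeasurable[ℱ (n + 1)] (M (n + 1)))
    (hM_sq : ∀ n, MemLp (M (n + 1)) 2 P)
    (hM_mds : ∀ n, P[M (n + 1) | ℱ n] =ᵐ[P] 0)
    (hM_bound : ∀ n, ∀ᵐ ω ∂P,
      (P[fun ω' => ‖M (n + 1) ω'‖ ^ 2 | ℱ n]) ω ≤ K * (1 + ‖x n ω‖ ^ 2))
    (ha_nonneg : ∀ n, 0 ≤ a n)
    (ha_div : Tendsto (fun n => ∑ m ∈ Finset.range n, a m) atTop atTop)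
    (ha_sq : Summable fun n => (a n) ^ 2)
    (hrec : ∀ n ω, x (n + 1) ω = x n ω + a n • (h (x n ω) + M (n + 1) ω))
    (habs : ∀ n, (P.map fun ω => (x n ω, M (n + 1) ω))
      ≪ (volume : Measure (Euc d × Euc d)))
    (htilde : Euc d → Euc d) (htilde_meas : Measurable htilde)
    (htilde_eq : ∀ᵐ v ∂(volume : Measure (Euc d)), htilde v = h v)
    (xt : ℕ → Ω → Euc d) (hxt0 : ∀ ω, xt 0 ω = x 0 ω)
    (hxtrec : ∀ n ω, xt (n + 1) ω = xt n ω + a n • (htilde (xt n ω) + M (n + 1) ω)) :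
    ∀ᵐ ω ∂P, ∀ n, xt n ω = x n ω := by
  set N : Set (Euc d) := {v | htilde v ≠ h v} with hN
  have hmeasN : MeasurableSet N :=
    (measurableSet_eq_fun htilde_meas hh_meas).compl
  have hNvol : volume N = 0 := htilde_eq
  have key : ∀ n, ∀ᵐ ω ∂P, htilde (x n ω) = h (x n ω) := by
    intro n
    have hxm : Measurable (x n) := ((hx_adapted n).mono (ℱ.le n)).measurable
    have hMm : Measurable (M (n + 1)) :=
      ((hM_adapted n).mono (ℱ.le (n + 1))).measurable
    have hpair : Measurable fun ω => (x n ω, M (n + 1) ω) := hxm.prodMk hMm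
    have hvol : (volume : Measure (Euc d × Euc d)) (N ×ˢ (univ : Set (Euc d))) = 0 := by
      rw [Measure.volume_eq_prod, Measure.prod_prod, hNvol, zero_mul]
    have h2 : (P.map fun ω => (x n ω, M (n + 1) ω)) (N ×ˢ (univ : Set (Euc d))) = 0 :=
      habs n hvol
    rw [Measure.map_apply hpair (hmeasN.prod MeasurableSet.univ)] at h2
    have : P {ω | htilde (x n ω) ≠ h (x n ω)} = 0 := by
      convert h2 using 2
      ext ω
      simp [N, Set.mem_prod]
    exact this
  have key' : ∀ᵐ ω ∂P, ∀ n, htilde (x n ω) = h (x n ω) := ae_all_iff.mpr key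
  filter_upwards [key'] with ω hω
  intro n
  induction n with
  | zero => exact hxt0 ω
  | succ n ih =>
    rw [hxtrec n ω, ih, hω n, hrec n ω]
end
end

section
/- Let a(n) ≥ 0 satisfy ∑_n a(n) = ∞ and ∑_n a(n)² < ∞, and let x(n), z(n), M(n+1) be sequences in ℝ^d with x(n+1) = x(n) + a(n)(z(n) + M(n+1)) and sup_n (‖x(n)‖ + ‖z(n)‖ + ‖M(n+1)‖) < ∞. Let f : ℝ^d → ℝ be a bounded twice continuously differentiable function with bounded first and second partial derivatives, and suppose the series ∑_{m} a(m) ⟨∇f(x(m)), M(m+1)⟩ converges. Then, with t(n) := ∑_{m=0}^{n−1} a(m), one has (1/t(n)) ∑_{k=0}^{n−1} a(k) ⟨∇f(x(k)), z(k)⟩ → 0 as n → ∞. -/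
open MeasureTheory Filter Topology Metric Set
open scoped RealInnerProductSpace

noncomputable section

/-- deterministic: under step-size conditions, bounded iterates, and
convergence of the noise series, the weighted averages
`(1/t(n)) ∑_{k<n} a(k) ⟨∇f(x(k)), z(k)⟩` vanish as `n → ∞`. -/
theorem stmt_12 {d : ℕ} (a t : ℕ → ℝ) (x z : ℕ → Euc d) (M : ℕ → Euc d)
    (ha_nonneg : ∀ n, 0 ≤ a n)
    (ha_div : Tendsto (fun n => ∑ m ∈ Finset.range n, a m) atTop atTop)
    (ha_sq : Summable fun n => (a n) ^ 2)
    (hrec : ∀ n, x (n + 1) = x n + a n • (z n + M (n + 1)))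
    (hbdd : ∃ C : ℝ, ∀ n, ‖x n‖ + ‖z n‖ + ‖M (n + 1)‖ ≤ C)
    (f : Euc d → ℝ) (hf : ContDiff ℝ 2 f)
    (hf_bdd : ∃ C : ℝ, ∀ v, |f v| ≤ C ∧ ‖fderiv ℝ f v‖ ≤ C ∧
      ‖fderiv ℝ (fderiv ℝ f) v‖ ≤ C)
    (hconv : ∃ c : ℝ, Tendsto
      (fun n => ∑ m ∈ Finset.range n, a m * ⟪gradient f (x m), M (m + 1)⟫) atTop (𝓝 c))
    (ht : ∀ n, t n = ∑ m ∈ Finset.range n, a m) :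
    Tendsto (fun n => (t n)⁻¹ * ∑ k ∈ Finset.range n, a k * ⟪gradient f (x k), z k⟫)
      atTop (𝓝 0) := by
  classical
  obtain ⟨C0, hC0⟩ := hbdd
  obtain ⟨C, hC⟩ := hf_bdd
  obtain ⟨c, hc⟩ := hconv
  have hC0nn : 0 ≤ C0 := le_trans (by positivity) (hC0 0)
  have hCnn : 0 ≤ C := le_trans (norm_nonneg _) (hC 0).2.1
  have hdiff : Differentiable ℝ f := hf.differentiable (by norm_num)
  have hdiff' : Differentiable ℝ (fderiv ℝ f) :=
    (hf.fderiv_right (m := 1) (by norm_num)).differentiable (by norm_num)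
  -- inner product with gradient equals fderiv applied
  have hginner : ∀ v w, ⟪gradient f v, w⟫ = fderiv ℝ f v w := fun v w =>
    InnerProductSpace.toDual_symm_apply
  -- Lipschitz bound on fderiv
  have hLip : ∀ u v : Euc d, ‖fderiv ℝ f u - fderiv ℝ f v‖ ≤ C * ‖u - v‖ := by
    intro u v
    exact Convex.norm_image_sub_le_of_norm_fderiv_le (f := fderiv ℝ f)
      (fun w _ => hdiff' w) (fun w _ => (hC w).2.2) convex_univ (mem_univ v) (mem_univ u)
  -- per-step Taylor bound
  have key : ∀ (u v : Euc d), |f v - f u - fderiv ℝ f u (v - u)| ≤ C * ‖v - u‖ * ‖v - u‖ := by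
    intro u v
    have := Convex.norm_image_sub_le_of_norm_fderiv_le' (f := f) (φ := fderiv ℝ f u)
      (s := closedBall u ‖v - u‖) (C := C * ‖v - u‖) (x := u) (y := v)
      (fun w _ => hdiff w)
      (fun w hw => by
        calc ‖fderiv ℝ f w - fderiv ℝ f u‖ ≤ C * ‖w - u‖ := hLip w u
          _ ≤ C * ‖v - u‖ := by
              have : ‖w - u‖ ≤ ‖v - u‖ := by simpa [dist_eq_norm] using hw
              nlinarith [norm_nonneg (w - u)])
      (convex_closedBall _ _) (mem_closedBall_self (norm_nonneg _))
      (by simp [mem_closedBall, dist_eq_norm])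
    simpa [Real.norm_eq_abs] using this
  -- error terms
  set e : ℕ → ℝ := fun k => f (x (k + 1)) - f (x k)
    - a k * ⟪gradient f (x k), z k⟫ - a k * ⟪gradient f (x k), M (k + 1)⟫ with he
  have hstep : ∀ k, ‖x (k + 1) - x k‖ ≤ a k * (2 * C0) := by
    intro k
    rw [hrec k]
    have h1 : ‖z k + M (k + 1)‖ ≤ 2 * C0 := by
      have := hC0 k
      have h2 := norm_nonneg (x k)
      calc ‖z k + M (k + 1)‖ ≤ ‖z k‖ + ‖M (k + 1)‖ := norm_add_le _ _
        _ ≤ 2 * C0 := by nlinarith [hC0 k, norm_nonneg (x k)]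
    calc ‖x k + a k • (z k + M (k + 1)) - x k‖ = a k * ‖z k + M (k + 1)‖ := by
          rw [add_sub_cancel_left, norm_smul, Real.norm_eq_abs, abs_of_nonneg (ha_nonneg k)]
      _ ≤ a k * (2 * C0) := by nlinarith [ha_nonneg k]
  have he_bound : ∀ k, |e k| ≤ C * (2 * C0) ^ 2 * a k ^ 2 := by
    intro k
    have hfd : fderiv ℝ f (x k) (x (k + 1) - x k)
        = a k * ⟪gradient f (x k), z k⟫ + a k * ⟪gradient f (x k), M (k + 1)⟫ := by
      rw [hrec k, hginner, hginner]
      simp [mul_add]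
    have h1 := key (x k) (x (k + 1))
    rw [hfd] at h1
    have h2 : |e k| ≤ C * ‖x (k + 1) - x k‖ * ‖x (k + 1) - x k‖ := by
      have : e k = f (x (k + 1)) - f (x k)
          - (a k * ⟪gradient f (x k), z k⟫ + a k * ⟪gradient f (x k), M (k + 1)⟫) := by
        rw [he]; ring
      rw [this]; exact h1
    have h3 := hstep k
    have h4 := norm_nonneg (x (k + 1) - x k)
    nlinarith [mul_le_mul h3 h3 h4 (mul_nonneg (ha_nonneg k) (by linarith) : (0:ℝ) ≤ a k * (2 * C0))]
  -- partial sums identity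
  set S : ℕ → ℝ := fun n => ∑ k ∈ Finset.range n, a k * ⟪gradient f (x k), z k⟫ with hSdef
  set U : ℕ → ℝ := fun n => ∑ m ∈ Finset.range n, a m * ⟪gradient f (x m), M (m + 1)⟫ with hUdef
  have hS : ∀ n, S n = (f (x n) - f (x 0)) - U n - ∑ k ∈ Finset.range n, e k := by
    intro n
    have : ∑ k ∈ Finset.range n, e k
        = (f (x n) - f (x 0)) - S n - U n := by
      have htel := Finset.sum_range_sub (fun k => f (x k)) n
      simp only [Finset.sum_sub_distrib] at htel
      rw [hSdef, hUdef, he]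
      simp only [Finset.sum_sub_distrib]
      rw [htel]
    rw [this]; ring
  -- bound on U
  obtain ⟨B1, hB1⟩ := hc.abs.bddAbove_range
  have hB1' : ∀ n, |U n| ≤ B1 := fun n => hB1 ⟨n, rfl⟩
  -- bound on error sum
  have hEsum : ∀ n, |∑ k ∈ Finset.range n, e k| ≤ C * (2 * C0) ^ 2 * ∑' k, (a k) ^ 2 := by
    intro n
    calc |∑ k ∈ Finset.range n, e k| ≤ ∑ k ∈ Finset.range n, |e k| :=
        Finset.abs_sum_le_sum_abs _ _
      _ ≤ ∑ k ∈ Finset.range n, C * (2 * C0) ^ 2 * a k ^ 2 :=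
        Finset.sum_le_sum (fun k _ => he_bound k)
      _ = C * (2 * C0) ^ 2 * ∑ k ∈ Finset.range n, a k ^ 2 := by
        rw [Finset.mul_sum]
      _ ≤ C * (2 * C0) ^ 2 * ∑' k, (a k) ^ 2 := by
        exact mul_le_mul_of_nonneg_left
          (Summable.sum_le_tsum (Finset.range n) (fun k _ => by positivity) ha_sq)
          (mul_nonneg hCnn (sq_nonneg _))
  set B : ℝ := 2 * C + B1 + C * (2 * C0) ^ 2 * ∑' k, (a k) ^ 2 with hB
  have hSB : ∀ n, |S n| ≤ B := by
    intro n
    rw [hS n, hB]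
    have h1 := (hC (x n)).1
    have h2 := (hC (x 0)).1
    have h3 := hB1' n
    have h4 := hEsum n
    calc |f (x n) - f (x 0) - U n - ∑ k ∈ Finset.range n, e k|
        ≤ |f (x n)| + |f (x 0)| + |U n| + |∑ k ∈ Finset.range n, e k| := by
          have := abs_sub (f (x n) - f (x 0) - U n) (∑ k ∈ Finset.range n, e k)
          have := abs_sub (f (x n) - f (x 0)) (U n)
          have := abs_sub (f (x n)) (f (x 0))
          calc |f (x n) - f (x 0) - U n - ∑ k ∈ Finset.range n, e k|
              ≤ |f (x n) - f (x 0) - U n| + |∑ k ∈ Finset.range n, e k| := abs_sub _ _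
            _ ≤ |f (x n) - f (x 0)| + |U n| + |∑ k ∈ Finset.range n, e k| := by
                linarith [abs_sub (f (x n) - f (x 0)) (U n)]
            _ ≤ |f (x n)| + |f (x 0)| + |U n| + |∑ k ∈ Finset.range n, e k| := by
                linarith [abs_sub (f (x n)) (f (x 0))]
      _ ≤ 2 * C + B1 + C * (2 * C0) ^ 2 * ∑' k, (a k) ^ 2 := by linarith
  -- t n nonneg and tendsto
  have htnn : ∀ n, 0 ≤ t n := fun n => by
    rw [ht n]; exact Finset.sum_nonneg (fun k _ => ha_nonneg k)
  have htt : Tendsto t atTop atTop := by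
    have : t = fun n => ∑ m ∈ Finset.range n, a m := funext ht
    rw [this]; exact ha_div
  have hinv : Tendsto (fun n => (t n)⁻¹) atTop (𝓝 0) :=
    tendsto_inv_atTop_zero.comp htt
  refine squeeze_zero_norm (a := fun n => (t n)⁻¹ * B) (fun n => ?_)
    (by simpa using hinv.mul_const B)
  rw [Real.norm_eq_abs, abs_mul, abs_inv, abs_of_nonneg (htnn n)]
  exact mul_le_mul_of_nonneg_left (hSB n) (inv_nonneg.mpr (htnn n))
end
end

section
/- Let a(n) ≥ 0 satisfy ∑_n a(n) = ∞ and ∑_n a(n)² < ∞, and let x(n), z(n), M(n+1) be sequences in ℝ^d with x(n+1) = x(n) + a(n)(z(n) + M(n+1)) and sup_n (‖x(n)‖ + ‖z(n)‖ + ‖M(n+1)‖) < ∞. Let f : ℝ^d → ℝ be a bounded twice continuously differentiable function with bounded first and second partial derivatives such that ∑_m a(m) ⟨∇f(x(m)), M(m+1)⟩ converges. Define the probability measures ν_n := (1/t(n)) ∑_{k=0}^{n−1} a(k) δ_{(x(k), z(k))} on ℝ^d × ℝ^d, where t(n) := ∑_{m=0}^{n−1} a(m) and δ_p is the Dirac measure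 at p. If a subsequence ν_{n_j} converges weakly to a probability measure μ*, then ∫ ⟨∇f(x), z⟩ dμ*(x, z) = 0. -/
open MeasureTheory Filter Topology Metric Set
open scoped RealInnerProductSpace

noncomputable section

/-- deterministic: if the weighted empirical measures
`ν_n = (1/t(n)) ∑_{k<n} a(k) δ_{(x(k), z(k))}` converge weakly along a subsequence to a
probability measure `μ*`, then `∫ ⟨∇f(x), z⟩ dμ*(x,z) = 0`. -/
theorem stmt_13 {d : ℕ} (a t : ℕ → ℝ) (x z : ℕ → Euc d) (M : ℕ → Euc d)
    (ha_nonneg : ∀ n, 0 ≤ a n)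
    (ha_div : Tendsto (fun n => ∑ m ∈ Finset.range n, a m) atTop atTop)
    (ha_sq : Summable fun n => (a n) ^ 2)
    (hrec : ∀ n, x (n + 1) = x n + a n • (z n + M (n + 1)))
    (hbdd : ∃ C : ℝ, ∀ n, ‖x n‖ + ‖z n‖ + ‖M (n + 1)‖ ≤ C)
    (f : Euc d → ℝ) (hf : ContDiff ℝ 2 f)
    (hf_bdd : ∃ C : ℝ, ∀ v, |f v| ≤ C ∧ ‖fderiv ℝ f v‖ ≤ C ∧
      ‖fderiv ℝ (fderiv ℝ f) v‖ ≤ C)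
    (hconv : ∃ c : ℝ, Tendsto
      (fun n => ∑ m ∈ Finset.range n, a m * ⟪gradient f (x m), M (m + 1)⟫) atTop (𝓝 c))
    (ht : ∀ n, t n = ∑ m ∈ Finset.range n, a m)
    (ν : ℕ → Measure (Euc d × Euc d))
    (hν : ∀ n, ν n = (ENNReal.ofReal (t n))⁻¹ •
      ∑ k ∈ Finset.range n, ENNReal.ofReal (a k) • Measure.dirac (x k, z k))
    (μstar : Measure (Euc d × Euc d)) [IsProbabilityMeasure μstar]
    (φ : ℕ → ℕ) (hφ : StrictMono φ)
    (hweak : ∀ g : BoundedContinuousFunction (Euc d × Euc d) ℝ,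
      Tendsto (fun j => ∫ p, g p ∂(ν (φ j))) atTop (𝓝 (∫ p, g p ∂μstar))) :
    ∫ p : Euc d × Euc d, ⟪gradient f p.1, p.2⟫ ∂μstar = 0 := by
  classical
  obtain ⟨C, hC⟩ := hbdd
  obtain ⟨Cf, hCf⟩ := hf_bdd
  have hC0 : 0 ≤ C := le_trans (by positivity) (hC 0)
  have hCf0 : 0 ≤ Cf := le_trans (abs_nonneg _) (hCf 0).1
  have hxb : ∀ n, ‖x n‖ ≤ C := fun n => by
    have := hC n; have := norm_nonneg (z n); have := norm_nonneg (M (n+1)); linarith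
  have hzb : ∀ n, ‖z n‖ ≤ C := fun n => by
    have := hC n; have := norm_nonneg (x n); have := norm_nonneg (M (n+1)); linarith
  have hMb : ∀ n, ‖M (n+1)‖ ≤ C := fun n => by
    have := hC n; have := norm_nonneg (x n); have := norm_nonneg (z n); linarith
  have hdiff : Differentiable ℝ f := hf.differentiable (by norm_num)
  have hinner : ∀ (v : Euc d) (w : Euc d), ⟪gradient f v, w⟫ = fderiv ℝ f v w := fun v w =>
    InnerProductSpace.toDual_symm_apply
  have hgradnorm : ∀ v, ‖gradient f v‖ ≤ Cf := fun v => by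
    rw [gradient, LinearIsometryEquiv.norm_map]; exact (hCf v).2.1
  have hgradcont : Continuous (gradient f) :=
    (LinearIsometryEquiv.continuous _).comp (hf.continuous_fderiv (by norm_num))
  have gcont : Continuous (fun p : Euc d × Euc d => ⟪gradient f p.1, p.2⟫) :=
    (hgradcont.comp continuous_fst).inner continuous_snd
  set K : ℝ := Cf * C with hK
  have hK0 : 0 ≤ K := mul_nonneg hCf0 hC0
  -- the clamped test function
  set G : BoundedContinuousFunction (Euc d × Euc d) ℝ :=
    BoundedContinuousFunction.ofNormedAddCommGroup
      (fun p => max (-K) (min K ⟪gradient f p.1, p.2⟫))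
      (continuous_const.max (continuous_const.min gcont)) K
      (fun p => by
        rw [Real.norm_eq_abs, abs_le]
        exact ⟨le_max_left _ _, max_le (by linarith) (min_le_left _ _)⟩) with hGdef
  have hGapp : ∀ p : Euc d × Euc d, ‖p.2‖ ≤ C → G p = ⟪gradient f p.1, p.2⟫ := by
    intro p hp
    have habs : |⟪gradient f p.1, p.2⟫| ≤ K := by
      refine le_trans (abs_real_inner_le_norm _ _) ?_
      exact mul_le_mul (hgradnorm _) hp (norm_nonneg _) hCf0
    have h1 : min K ⟪gradient f p.1, p.2⟫ = ⟪gradient f p.1, p.2⟫ :=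
      min_eq_right (abs_le.1 habs).2
    have h2 : max (-K) ⟪gradient f p.1, p.2⟫ = ⟪gradient f p.1, p.2⟫ :=
      max_eq_right (abs_le.1 habs).1
    simp only [hGdef, BoundedContinuousFunction.coe_ofNormedAddCommGroup, h1, h2]
  have ht_nonneg : ∀ n, 0 ≤ t n := fun n => by
    rw [ht n]; exact Finset.sum_nonneg fun m _ => ha_nonneg m
  -- integral of a bounded continuous function against ν n
  have hInt : ∀ (H : BoundedContinuousFunction (Euc d × Euc d) ℝ) (n : ℕ),
      ∫ p, H p ∂(ν n) = (t n)⁻¹ * ∑ k ∈ Finset.range n, a k * H (x k, z k) := by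
    intro H n
    rw [hν n, integral_smul_measure,
      integral_finset_sum_measure (fun k _ => (H.integrable _).smul_measure ENNReal.ofReal_ne_top)]
    rw [ENNReal.toReal_inv, ENNReal.toReal_ofReal (ht_nonneg n), smul_eq_mul]
    congr 1
    refine Finset.sum_congr rfl fun k _ => ?_
    rw [integral_smul_measure, integral_dirac, ENNReal.toReal_ofReal (ha_nonneg k), smul_eq_mul]
  -- the set where the empirical measures live
  set Sset : Set (Euc d × Euc d) := {p | ‖p.2‖ ≤ C} with hSset
  have hSclosed : IsClosed Sset := isClosed_le (continuous_snd.norm) continuous_const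
  have hSne : Sset.Nonempty := ⟨(0, 0), by simp [hSset, hC0]⟩
  -- μstar is concentrated on Sset
  have hcompl : μstar Ssetᶜ = 0 := by
    set H : BoundedContinuousFunction (Euc d × Euc d) ℝ :=
      BoundedContinuousFunction.ofNormedAddCommGroup
        (fun p => min 1 (infDist p Sset))
        (continuous_const.min (continuous_infDist_pt _)) 1
        (fun p => by
          have h := infDist_nonneg (x := p) (s := Sset)
          rw [Real.norm_eq_abs, abs_le]
          refine ⟨?_, min_le_left _ _⟩
          show (-1:ℝ) ≤ min 1 (infDist p Sset)
          have h2 : (0:ℝ) ≤ min 1 (infDist p Sset) := le_min zero_le_one h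
          linarith)
      with hHdef
    have hHapp : ∀ p, H p = min 1 (infDist p Sset) := fun p => rfl
    have hH0 : ∀ k : ℕ, H (x k, z k) = 0 := fun k => by
      rw [hHapp, infDist_zero_of_mem (by exact hzb k), min_eq_right zero_le_one]
    have hHν : ∀ n, ∫ p, H p ∂(ν n) = 0 := fun n => by
      rw [hInt H n]
      simp only [hH0, mul_zero, Finset.sum_const_zero, mul_zero]
    have h0 : ∫ p, H p ∂μstar = 0 := by
      have := hweak H
      rw [show (fun j => ∫ p, H p ∂(ν (φ j))) = fun _ => (0:ℝ) from funext fun j => hHν _] at this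
      exact (tendsto_nhds_unique tendsto_const_nhds this).symm
    have hHnn : (0 : Euc d × Euc d → ℝ) ≤ fun p => H p := fun p =>
      le_min zero_le_one infDist_nonneg
    have hae : (fun p => H p) =ᵐ[μstar] 0 :=
      (integral_eq_zero_iff_of_nonneg hHnn (H.integrable μstar)).1 h0
    have hset : μstar {p | H p ≠ 0} = 0 := by
      have := hae
      rw [Filter.EventuallyEq, ae_iff] at this
      simpa using this
    refine measure_mono_null (fun p hp => ?_) hset
    have hpos : 0 < infDist p Sset := (hSclosed.notMem_iff_infDist_pos hSne).1 hp
    exact ne_of_gt (lt_min one_pos hpos)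
  -- Taylor estimate per step
  have hlip : ∀ u v : Euc d, ‖fderiv ℝ f u - fderiv ℝ f v‖ ≤ Cf * ‖u - v‖ := by
    intro u v
    have hdf : ContDiff ℝ 1 (fderiv ℝ f) := hf.fderiv_right (by norm_num)
    exact convex_univ.norm_image_sub_le_of_norm_fderiv_le
      (fun w _ => (hdf.differentiable (by norm_num)).differentiableAt)
      (fun w _ => (hCf w).2.2) (mem_univ v) (mem_univ u)
  have hstep : ∀ k, |f (x (k+1)) - f (x k) - a k * ⟪gradient f (x k), z k⟫
      - a k * ⟪gradient f (x k), M (k+1)⟫| ≤ (4 * C^2 * Cf) * (a k)^2 := by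
    intro k
    set Δ : Euc d := a k • (z k + M (k+1)) with hΔ
    have hΔn : ‖Δ‖ ≤ a k * (2 * C) := by
      rw [hΔ, norm_smul, Real.norm_eq_abs, abs_of_nonneg (ha_nonneg k)]
      refine mul_le_mul_of_nonneg_left ?_ (ha_nonneg k)
      calc ‖z k + M (k+1)‖ ≤ ‖z k‖ + ‖M (k+1)‖ := norm_add_le _ _
        _ ≤ 2 * C := by have := hzb k; have := hMb k; linarith
    have hxk : x (k+1) = x k + Δ := hrec k
    have htaylor : ‖f (x k + Δ) - f (x k) - (fderiv ℝ f (x k)) ((x k + Δ) - x k)‖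
        ≤ (Cf * ‖Δ‖) * ‖(x k + Δ) - x k‖ := by
      refine (convex_closedBall (x k) ‖Δ‖).norm_image_sub_le_of_norm_fderiv_le'
        (fun w _ => hdiff.differentiableAt) (fun w hw => ?_)
        (mem_closedBall_self (norm_nonneg _)) ?_
      · refine (hlip w (x k)).trans ?_
        refine mul_le_mul_of_nonneg_left ?_ hCf0
        rwa [mem_closedBall_iff_norm] at hw
      · rw [mem_closedBall_iff_norm]; simp
    rw [add_sub_cancel_left] at htaylor
    have hfd : (fderiv ℝ f (x k)) Δ
        = a k * ⟪gradient f (x k), z k⟫ + a k * ⟪gradient f (x k), M (k+1)⟫ := by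
      rw [hΔ, (fderiv ℝ f (x k)).map_smul, map_add, ← hinner, ← hinner, smul_eq_mul, mul_add]
    have h1 : |f (x (k+1)) - f (x k) - a k * ⟪gradient f (x k), z k⟫
        - a k * ⟪gradient f (x k), M (k+1)⟫| ≤ (Cf * ‖Δ‖) * ‖Δ‖ := by
      rw [hxk]
      calc |f (x k + Δ) - f (x k) - a k * ⟪gradient f (x k), z k⟫
            - a k * ⟪gradient f (x k), M (k+1)⟫|
          = ‖f (x k + Δ) - f (x k) - (fderiv ℝ f (x k)) Δ‖ := by
            rw [Real.norm_eq_abs, hfd]; ring_nf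
        _ ≤ (Cf * ‖Δ‖) * ‖Δ‖ := htaylor
    refine h1.trans ?_
    have hΔ0 : 0 ≤ ‖Δ‖ := norm_nonneg _
    have h2C : (0:ℝ) ≤ a k * (2 * C) := mul_nonneg (ha_nonneg k) (by linarith)
    calc (Cf * ‖Δ‖) * ‖Δ‖ ≤ (Cf * (a k * (2*C))) * (a k * (2*C)) := by
          apply mul_le_mul (mul_le_mul_of_nonneg_left hΔn hCf0) hΔn hΔ0
          positivity
      _ = (4 * C^2 * Cf) * (a k)^2 := by ring
  -- boundedness of the partial sums S n
  obtain ⟨c, hc⟩ := hconv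
  set T : ℕ → ℝ := fun n => ∑ m ∈ Finset.range n, a m * ⟪gradient f (x m), M (m + 1)⟫ with hT
  obtain ⟨U, hU⟩ := hc.bddAbove_range
  obtain ⟨Lo, hLo⟩ := hc.bddBelow_range
  have hTb : ∀ n, |T n| ≤ max U (-Lo) := by
    intro n
    rw [abs_le]
    constructor
    · have : Lo ≤ T n := hLo ⟨n, rfl⟩
      have : -T n ≤ -Lo := by linarith
      have h' : -Lo ≤ max U (-Lo) := le_max_right _ _
      linarith
    · exact le_trans (hU ⟨n, rfl⟩) (le_max_left _ _)
  set Q : ℝ := ∑' n, (a n)^2 with hQ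
  have hQb : ∀ n, ∑ k ∈ Finset.range n, (a k)^2 ≤ Q :=
    fun n => Summable.sum_le_tsum _ (fun i _ => sq_nonneg _) ha_sq
  have hQ0 : 0 ≤ Q := tsum_nonneg fun i => sq_nonneg _
  set S : ℕ → ℝ := fun n => ∑ m ∈ Finset.range n, a m * ⟪gradient f (x m), z m⟫ with hS
  set B : ℝ := 2 * Cf + max U (-Lo) + (4 * C^2 * Cf) * Q with hB
  have hSb : ∀ n, |S n| ≤ B := by
    intro n
    have htel : ∑ k ∈ Finset.range n, (f (x (k+1)) - f (x k)) = f (x n) - f (x 0) :=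
      Finset.sum_range_sub (fun k => f (x k)) n
    have hE : |∑ k ∈ Finset.range n, (f (x (k+1)) - f (x k)
        - a k * ⟪gradient f (x k), z k⟫ - a k * ⟪gradient f (x k), M (k+1)⟫)|
        ≤ (4 * C^2 * Cf) * Q := by
      refine (Finset.abs_sum_le_sum_abs _ _).trans ?_
      refine le_trans (Finset.sum_le_sum fun k _ => hstep k) ?_
      rw [← Finset.mul_sum]
      exact mul_le_mul_of_nonneg_left (hQb n) (by positivity)
    have hsplit : ∑ k ∈ Finset.range n, (f (x (k+1)) - f (x k)
        - a k * ⟪gradient f (x k), z k⟫ - a k * ⟪gradient f (x k), M (k+1)⟫)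
        = (f (x n) - f (x 0)) - S n - T n := by
      rw [hS, hT, ← htel]
      rw [← Finset.sum_sub_distrib, ← Finset.sum_sub_distrib]
    rw [hsplit] at hE
    have h1 := (hCf (x n)).1
    have h2 := (hCf (x 0)).1
    have h3 := hTb n
    rw [abs_le] at h1 h2 h3 hE ⊢
    rw [hB]
    constructor <;> [nlinarith [hE.1, hE.2, h1.1, h1.2, h2.1, h2.2, h3.1, h3.2];
      nlinarith [hE.1, hE.2, h1.1, h1.2, h2.1, h2.2, h3.1, h3.2]]
  -- the integral of G against ν n tends to 0
  have httop : Tendsto t atTop atTop := by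
    refine ha_div.congr fun n => (ht n).symm
  have hGν : ∀ n, ∫ p, G p ∂(ν n) = (t n)⁻¹ * S n := by
    intro n
    rw [hInt G n]
    congr 1
    exact Finset.sum_congr rfl fun k _ => by rw [hGapp (x k, z k) (hzb k)]
  have hlim : Tendsto (fun n => (t n)⁻¹ * S n) atTop (𝓝 0) := by
    have hb : ∀ n, ‖(t n)⁻¹ * S n‖ ≤ B * (t n)⁻¹ := by
      intro n
      rw [Real.norm_eq_abs, abs_mul, abs_of_nonneg (inv_nonneg.2 (ht_nonneg n)), mul_comm]
      exact mul_le_mul_of_nonneg_right (hSb n) (inv_nonneg.2 (ht_nonneg n))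
    have h0 : Tendsto (fun n => B * (t n)⁻¹) atTop (𝓝 0) := by
      have := httop.inv_tendsto_atTop
      simpa using this.const_mul B
    exact squeeze_zero_norm hb h0
  have hGμ : ∫ p, G p ∂μstar = 0 := by
    have h1 : Tendsto (fun j => ∫ p, G p ∂(ν (φ j))) atTop (𝓝 0) := by
      have := hlim.comp hφ.tendsto_atTop
      refine this.congr fun j => (hGν (φ j)).symm
    exact tendsto_nhds_unique (hweak G) h1
  -- conclude
  have haeeq : (fun p : Euc d × Euc d => ⟪gradient f p.1, p.2⟫) =ᵐ[μstar] fun p => G p := by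
    rw [Filter.EventuallyEq, ae_iff]
    refine measure_mono_null (fun p hp => ?_) hcompl
    simp only [mem_compl_iff, hSset, mem_setOf_eq]
    intro hpS
    exact hp (hGapp p hpS).symm
  rw [integral_congr_ae haeeq, hGμ]
end
end

section
/- Let h : ℝ^d → ℝ^d be measurable and locally bounded, let x(k) be a bounded sequence in ℝ^d, set z(k) := h(x(k)), and let a(n) ≥ 0 satisfy ∑_n a(n) = ∞. Define the probability measures ν_n := (1/t(n)) ∑_{k=0}^{n−1} a(k) δ_{(x(k), z(k))} on ℝ^d × ℝ^d, where t(n) := ∑_{m=0}^{n−1} a(m). If a subsequence ν_{n_j} converges weakly to a probability measure μ*, then μ* is supported on the graph {(x, z) : z ∈ K_h(x)} of the Krasovskii set-valued map, i.e., μ*({(x, z) : z ∈ K_h(x)}) = 1. -/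
open MeasureTheory Filter Topology Metric Set
open scoped RealInnerProductSpace

noncomputable section

open scoped ENNReal NNReal

lemma self_mem_Krasovskii {d : ℕ} (h : Euc d → Euc d) (y : Euc d) :
    h y ∈ Krasovskii h y := by
  simp only [Krasovskii, mem_iInter]
  intro δ hδ
  exact subset_closure (subset_convexHull ℝ _ ⟨y, by simp [hδ], rfl⟩)

/-- STATEMENT 14 helper -/
lemma isClosed_Krasovskii_graph {d : ℕ} (h : Euc d → Euc d) :
    IsClosed {p : Euc d × Euc d | p.2 ∈ Krasovskii h p.1} := by
  refine isClosed_of_closure_subset ?_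
  intro p hp
  simp only [Krasovskii, mem_setOf_eq, mem_iInter]
  intro δ hδ
  set S := closure (convexHull ℝ (h '' {y | ‖y - p.1‖ < δ})) with hS
  have hSclosed : IsClosed S := isClosed_closure
  rw [← hSclosed.closure_eq]
  rw [Metric.mem_closure_iff]
  intro ε hε
  rw [Metric.mem_closure_iff] at hp
  obtain ⟨q, hqG, hqd⟩ := hp (min ε (δ / 2)) (lt_min hε (by linarith))
  have hq2 : q.2 ∈ Krasovskii h q.1 := hqG
  have hq2' : q.2 ∈ closure (convexHull ℝ (h '' {y | ‖y - q.1‖ < δ / 2})) := by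
    simp only [Krasovskii, mem_iInter] at hq2
    exact hq2 (δ / 2) (by linarith)
  have hsub : closure (convexHull ℝ (h '' {y | ‖y - q.1‖ < δ / 2})) ⊆ S := by
    apply closure_mono
    apply convexHull_mono
    apply image_mono
    intro y hy
    simp only [mem_setOf_eq] at hy ⊢
    have h1 : ‖q.1 - p.1‖ < δ / 2 := by
      have := (le_max_left (dist p.1 q.1) (dist p.2 q.2)).trans_lt
        (lt_of_lt_of_le hqd (min_le_right _ _))
      rw [dist_comm] at this
      simpa [dist_eq_norm] using this
    calc ‖y - p.1‖ ≤ ‖y - q.1‖ + ‖q.1 - p.1‖ := by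
          simpa using norm_add_le (y - q.1) (q.1 - p.1)
      _ < δ / 2 + δ / 2 := by exact add_lt_add hy h1
      _ = δ := by ring
  refine ⟨q.2, hsub hq2', ?_⟩
  have : dist p.2 q.2 ≤ dist p q := le_max_right _ _
  exact this.trans_lt (lt_of_lt_of_le hqd (min_le_left _ _))

/-- deterministic: any weak subsequential limit `μ*` of the weighted
empirical measures `ν_n = (1/t(n)) ∑_{k<n} a(k) δ_{(x(k), h(x(k)))}` is supported on the
graph of the Krasovskii map `K_h`. -/
theorem stmt_14 {d : ℕ} (h : Euc d → Euc d) (hh_meas : Measurable h)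
    (hh_bdd : LocallyBounded h)
    (x : ℕ → Euc d) (hx_bdd : ∃ C : ℝ, ∀ n, ‖x n‖ ≤ C)
    (z : ℕ → Euc d) (hz : ∀ k, z k = h (x k))
    (a t : ℕ → ℝ) (ha_nonneg : ∀ n, 0 ≤ a n)
    (ha_div : Tendsto (fun n => ∑ m ∈ Finset.range n, a m) atTop atTop)
    (ht : ∀ n, t n = ∑ m ∈ Finset.range n, a m)
    (ν : ℕ → Measure (Euc d × Euc d))
    (hν : ∀ n, ν n = (ENNReal.ofReal (t n))⁻¹ •
      ∑ k ∈ Finset.range n, ENNReal.ofReal (a k) • Measure.dirac (x k, z k))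
    (μstar : Measure (Euc d × Euc d)) [IsProbabilityMeasure μstar]
    (φ : ℕ → ℕ) (hφ : StrictMono φ)
    (hweak : ∀ g : BoundedContinuousFunction (Euc d × Euc d) ℝ,
      Tendsto (fun j => ∫ p, g p ∂(ν (φ j))) atTop (𝓝 (∫ p, g p ∂μstar))) :
    μstar {p : Euc d × Euc d | p.2 ∈ Krasovskii h p.1} = 1 := by
  set F := {p : Euc d × Euc d | p.2 ∈ Krasovskii h p.1} with hFdef
  have F_closed : IsClosed F := isClosed_Krasovskii_graph h
  have F_meas : MeasurableSet F := F_closed.measurableSet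
  have hmemF : ∀ k, (x k, z k) ∈ F := by
    intro k
    simp only [hFdef, mem_setOf_eq, hz k]
    exact self_mem_Krasovskii h (x k)
  -- t n is the partial sum and is nonneg
  have ht_nonneg : ∀ n, 0 ≤ t n := fun n => by
    rw [ht n]; exact Finset.sum_nonneg fun m _ => ha_nonneg m
  -- measure of compl of F is zero
  have hνFc : ∀ n, ν n Fᶜ = 0 := by
    intro n
    rw [hν n]
    simp only [Measure.smul_apply, Measure.coe_finset_sum, Finset.sum_apply]
    have : ∀ k ∈ Finset.range n,
        ENNReal.ofReal (a k) • (Measure.dirac (x k, z k)) Fᶜ = 0 := by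
      intro k _
      rw [Measure.dirac_apply' _ F_meas.compl]
      simp [indicator_of_notMem, hmemF k]
    rw [Finset.sum_eq_zero this, smul_zero]
  -- total mass
  have hνuniv : ∀ n, ν n univ = (ENNReal.ofReal (t n))⁻¹ * ENNReal.ofReal (t n) := by
    intro n
    rw [hν n]
    simp only [Measure.smul_apply, Measure.coe_finset_sum, Finset.sum_apply,
      Measure.smul_apply, Measure.dirac_apply' _ MeasurableSet.univ]
    simp only [indicator_univ, Pi.one_apply, smul_eq_mul, mul_one]
    rw [← ENNReal.ofReal_sum_of_nonneg fun m _ => ha_nonneg m, ← ht n]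
  have hνuniv1 : ∀ n, 0 < t n → ν n univ = 1 := by
    intro n hpos
    rw [hνuniv n, ENNReal.inv_mul_cancel]
    · exact (ENNReal.ofReal_pos.mpr hpos).ne'
    · exact ENNReal.ofReal_ne_top
  haveI hfin : ∀ n, IsFiniteMeasure (ν n) := by
    intro n
    constructor
    rw [hνuniv n]
    exact lt_of_le_of_lt (ENNReal.inv_mul_le_one _) ENNReal.one_lt_top
  have hνF1 : ∀ n, 0 < t n → ν n F = 1 := by
    intro n hpos
    have := measure_add_measure_compl (μ := ν n) F_meas
    rw [hνFc n, add_zero, hνuniv1 n hpos] at this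
    exact this
  -- eventually t (φ j) > 0
  have hev : ∀ᶠ j in atTop, 0 < t (φ j) := by
    have h1 : ∀ᶠ n in atTop, 0 < t n := by
      filter_upwards [ha_div.eventually (eventually_gt_atTop 0)] with n hn
      rw [ht n]; exact hn
    exact hφ.tendsto_atTop.eventually h1
  -- approximating sequence
  set fs : ℕ → BoundedContinuousFunction (Euc d × Euc d) NNReal := F_closed.apprSeq with hfs
  have key : ∀ M : ℕ, (1 : ℝ≥0∞) ≤ ∫⁻ p, fs M p ∂μstar := by
    intro M
    -- real-valued bounded continuous version of fs M
    let g : BoundedContinuousFunction (Euc d × Euc d) ℝ :=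
      ⟨⟨fun p => (fs M p : ℝ), NNReal.continuous_coe.comp (fs M).continuous⟩, 2, by
        intro p q
        have hp : |((fs M p : ℝ))| ≤ 1 := by
          rw [abs_of_nonneg (fs M p).coe_nonneg]
          exact_mod_cast HasOuterApproxClosed.apprSeq_apply_le_one F_closed M p
        have hq : |((fs M q : ℝ))| ≤ 1 := by
          rw [abs_of_nonneg (fs M q).coe_nonneg]
          exact_mod_cast HasOuterApproxClosed.apprSeq_apply_le_one F_closed M q
        rw [Real.dist_eq]
        calc |(fs M p : ℝ) - (fs M q : ℝ)| ≤ |(fs M p : ℝ)| + |(fs M q : ℝ)| :=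
              abs_sub _ _
          _ ≤ 2 := by linarith⟩
    have hglim := hweak g
    have hge : ∀ᶠ j in atTop, (1 : ℝ) ≤ ∫ p, g p ∂(ν (φ j)) := by
      filter_upwards [hev] with j hj
      have h1 : (1 : ℝ≥0∞) ≤ ∫⁻ p, fs M p ∂(ν (φ j)) := by
        rw [← hνF1 (φ j) hj]
        exact HasOuterApproxClosed.measure_le_lintegral F_closed (ν (φ j)) M
      have h2 : ∫ p, g p ∂(ν (φ j)) = (∫⁻ p, fs M p ∂(ν (φ j))).toReal :=
        (BoundedContinuousFunction.toReal_lintegral_coe_eq_integral (fs M) _).symm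
      rw [h2]
      have hlt : ∫⁻ p, fs M p ∂(ν (φ j)) < ⊤ :=
        BoundedContinuousFunction.lintegral_lt_top_of_nnreal _ (fs M)
      have := ENNReal.toReal_mono hlt.ne h1
      simpa using this
    have hmu : (1 : ℝ) ≤ ∫ p, g p ∂μstar := ge_of_tendsto hglim hge
    have h3 : ∫ p, g p ∂μstar = (∫⁻ p, fs M p ∂μstar).toReal :=
      (BoundedContinuousFunction.toReal_lintegral_coe_eq_integral (fs M) _).symm
    rw [h3] at hmu
    have hlt : ∫⁻ p, fs M p ∂μstar < ⊤ :=
      BoundedContinuousFunction.lintegral_lt_top_of_nnreal _ (fs M)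
    rw [← ENNReal.ofReal_toReal hlt.ne]
    exact_mod_cast ENNReal.one_le_ofReal.mpr hmu
  have hlim := HasOuterApproxClosed.tendsto_lintegral_apprSeq F_closed μstar
  have h1 : (1 : ℝ≥0∞) ≤ μstar F := ge_of_tendsto hlim (Eventually.of_forall key)
  exact le_antisymm prob_le_one h1
end
end

section
/- Under the stochastic approximation setup with h : ℝ^d → ℝ^d measurable and locally bounded, suppose the law of (x(n), M(n+1)) is absolutely continuous with respect to Lebesgue measure on ℝ^{2d} for every n. Then almost surely: h(x(n)) ∈ F_h(x(n)) for every n, and consequently, for the probability measures ν_n := (1/t(n)) ∑_{k=0}^{n−1} a(k) δ_{(x(k), h(x(k)))} on ℝ^d × ℝ^d, every weak limit point μ* of (ν_n) is supported on the graph {(x, z) : z ∈ F_h(x)} of the Filippov set-valued map. -/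
open MeasureTheory Filter Topology Metric Set
open scoped RealInnerProductSpace

noncomputable section

private lemma bad_null {d : ℕ} (A : Set (Euc d)) :
    volume {x | x ∈ A ∧ ∃ δ > 0, volume (A ∩ ball x δ) = 0} = 0 := by
  obtain ⟨u, hu⟩ := TopologicalSpace.exists_dense_seq (Euc d)
  have hU : volume (⋃ (j : ℕ) (k : ℕ)
      (_ : volume (A ∩ ball (u j) ((k + 1 : ℝ)⁻¹)) = 0), A ∩ ball (u j) ((k + 1 : ℝ)⁻¹)) = 0 :=
    measure_iUnion_null fun j => measure_iUnion_null fun k =>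
      measure_iUnion_null fun h0 => h0
  refine measure_mono_null ?_ hU
  rintro z ⟨hzA, δ, hδ, h0⟩
  obtain ⟨k, hk⟩ := exists_nat_gt (2 / δ)
  have hkpos : (0:ℝ) < (k + 1 : ℝ) := by positivity
  have hr : (k + 1 : ℝ)⁻¹ < δ / 2 := by
    rw [inv_lt_iff_one_lt_mul₀ hkpos]
    have h2 : 2 / δ < (k:ℝ) + 1 := by linarith
    rw [div_lt_iff₀ hδ] at h2
    linarith
  have hrpos : (0:ℝ) < (k + 1 : ℝ)⁻¹ := by positivity
  obtain ⟨j, hj⟩ := hu.exists_dist_lt z hrpos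
  refine mem_iUnion.2 ⟨j, mem_iUnion.2 ⟨k, mem_iUnion.2 ⟨?_, hzA, ?_⟩⟩⟩
  · refine measure_mono_null ?_ h0
    rintro y ⟨hyA, hyb⟩
    refine ⟨hyA, ?_⟩
    rw [mem_ball] at hyb ⊢
    calc dist y z ≤ dist y (u j) + dist (u j) z := dist_triangle _ _ _
      _ < (k + 1 : ℝ)⁻¹ + (k + 1 : ℝ)⁻¹ := by
          rw [dist_comm (u j) z]; exact add_lt_add hyb hj
      _ < δ := by linarith
  · rw [mem_ball]; exact hj

private lemma exists_null_filippov {d : ℕ} (h : Euc d → Euc d) :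
    ∃ E : Set (Euc d), MeasurableSet E ∧ volume E = 0 ∧
      ∀ x ∉ E, h x ∈ Filippov h x := by
  obtain ⟨u, hu⟩ := TopologicalSpace.exists_dense_seq (Euc d)
  set A : ℕ → ℕ → Set (Euc d) := fun i m => h ⁻¹' ball (u i) ((m + 1 : ℝ)⁻¹) with hA
  set B := ⋃ (i : ℕ) (m : ℕ),
    {x | x ∈ A i m ∧ ∃ δ > 0, volume (A i m ∩ ball x δ) = 0} with hBdef
  have hB : volume B = 0 :=
    measure_iUnion_null fun i => measure_iUnion_null fun m => bad_null _
  obtain ⟨E, hBE, hEmeas, hE0⟩ := exists_measurable_superset_of_null hB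
  refine ⟨E, hEmeas, hE0, ?_⟩
  intro z hzE
  have hzB : z ∉ B := fun hz => hzE (hBE hz)
  simp only [Filippov, Set.mem_iInter]
  intro N hN δ hδ
  refine closure_mono (subset_convexHull ℝ _) (Metric.mem_closure_iff.2 ?_)
  intro ε hε
  obtain ⟨m, hm⟩ := exists_nat_gt (2 / ε)
  have hmpos : (0:ℝ) < (m + 1 : ℝ) := by positivity
  have hr : (m + 1 : ℝ)⁻¹ < ε / 2 := by
    rw [inv_lt_iff_one_lt_mul₀ hmpos]
    have h2 : 2 / ε < (m:ℝ) + 1 := by linarith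
    rw [div_lt_iff₀ hε] at h2
    linarith
  have hrpos : (0:ℝ) < (m + 1 : ℝ)⁻¹ := by positivity
  obtain ⟨i, hi⟩ := hu.exists_dist_lt (h z) hrpos
  have hzA : z ∈ A i m := by
    simp only [hA, mem_preimage, mem_ball]; exact hi
  have hnot : ¬ ∃ δ' > 0, volume (A i m ∩ ball z δ') = 0 := by
    intro hc
    exact hzB (mem_iUnion.2 ⟨i, mem_iUnion.2 ⟨m, hzA, hc⟩⟩)
  push_neg at hnot
  have hvol : volume ((A i m ∩ ball z δ) \ N) ≠ 0 := by
    rw [measure_diff_null hN]; exact hnot δ hδ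
  obtain ⟨y, ⟨hyA, hyb⟩, hyN⟩ := nonempty_of_measure_ne_zero hvol
  refine ⟨h y, mem_image_of_mem h ⟨?_, hyN⟩, ?_⟩
  · rw [← dist_eq_norm]; exact mem_ball.1 hyb
  · have hy' : dist (h y) (u i) < (m + 1 : ℝ)⁻¹ := mem_ball.1 hyA
    calc dist (h z) (h y) ≤ dist (h z) (u i) + dist (u i) (h y) := dist_triangle _ _ _
      _ < (m + 1 : ℝ)⁻¹ + (m + 1 : ℝ)⁻¹ := by
          rw [dist_comm (u i)]; exact add_lt_add hi hy'
      _ < ε := by linarith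

private lemma isClosed_filippov_graph {d : ℕ} (h : Euc d → Euc d) :
    IsClosed {p : Euc d × Euc d | p.2 ∈ Filippov h p.1} := by
  refine isClosed_of_closure_subset ?_
  intro p hp
  simp only [mem_setOf_eq, Filippov, Set.mem_iInter]
  intro N hN δ hδ
  set C := closure (convexHull ℝ (h '' {y | ‖y - p.1‖ < δ ∧ y ∉ N})) with hC
  have hmem : p.2 ∈ closure C := by
    refine Metric.mem_closure_iff.2 fun ε hε => ?_
    obtain ⟨q, hqG, hq⟩ := Metric.mem_closure_iff.1 hp (min ε (δ / 2))
      (lt_min hε (by linarith))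
    have hd1 : dist p.1 q.1 ≤ dist p q := by rw [Prod.dist_eq]; exact le_max_left _ _
    have hd2 : dist p.2 q.2 ≤ dist p q := by rw [Prod.dist_eq]; exact le_max_right _ _
    have hq1 : dist p.1 q.1 < δ / 2 := lt_of_le_of_lt hd1 (lt_of_lt_of_le hq (min_le_right _ _))
    have hq2 : dist p.2 q.2 < ε := lt_of_le_of_lt hd2 (lt_of_lt_of_le hq (min_le_left _ _))
    simp only [mem_setOf_eq, Filippov, Set.mem_iInter] at hqG
    have hsub : {y : Euc d | ‖y - q.1‖ < δ / 2 ∧ y ∉ N} ⊆ {y | ‖y - p.1‖ < δ ∧ y ∉ N} := by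
      rintro y ⟨hy1, hy2⟩
      refine ⟨?_, hy2⟩
      have : ‖y - p.1‖ ≤ ‖y - q.1‖ + ‖q.1 - p.1‖ := norm_sub_le_norm_sub_add_norm_sub _ _ _
      have hqp : ‖q.1 - p.1‖ < δ / 2 := by rw [← dist_eq_norm, dist_comm]; exact hq1
      linarith
    have hq2C : q.2 ∈ C :=
      closure_mono (convexHull_mono (image_mono hsub)) (hqG N hN (δ / 2) (by linarith))
    exact ⟨q.2, hq2C, hq2⟩
  rwa [closure_closure] at hmem

/-- under the stochastic approximation setup with absolutely continuous
laws of `(x(n), M(n+1))`, almost surely `h(x(n)) ∈ F_h(x(n))` for every `n`, and every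
weak subsequential limit of the weighted empirical measures
`ν_n = (1/t(n)) ∑_{k<n} a(k) δ_{(x(k), h(x(k)))}` is supported on the graph of `F_h`. -/
theorem stmt_15 {d : ℕ} {Ω : Type*} {m0 : MeasurableSpace Ω} (P : Measure Ω)
    [IsProbabilityMeasure P] (ℱ : Filtration ℕ m0)
    (h : Euc d → Euc d) (hh_meas : Measurable h) (hh_bdd : LocallyBounded h)
    (x M : ℕ → Ω → Euc d) (a : ℕ → ℝ) (K : ℝ) (hK : 0 < K)
    (hx_adapted : ∀ n, StronglyMeasurable[ℱ n] (x n))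
    (hM_adapted : ∀ n, StronglyMeasurable[ℱ (n + 1)] (M (n + 1)))
    (hM_sq : ∀ n, MemLp (M (n + 1)) 2 P)
    (hM_mds : ∀ n, P[M (n + 1) | ℱ n] =ᵐ[P] 0)
    (hM_bound : ∀ n, ∀ᵐ ω ∂P,
      (P[fun ω' => ‖M (n + 1) ω'‖ ^ 2 | ℱ n]) ω ≤ K * (1 + ‖x n ω‖ ^ 2))
    (ha_nonneg : ∀ n, 0 ≤ a n)
    (ha_div : Tendsto (fun n => ∑ m ∈ Finset.range n, a m) atTop atTop)
    (ha_sq : Summable fun n => (a n) ^ 2)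
    (hrec : ∀ n ω, x (n + 1) ω = x n ω + a n • (h (x n ω) + M (n + 1) ω))
    (hx_bdd : ∀ᵐ ω ∂P, ∃ C : ℝ, ∀ n, ‖x n ω‖ ≤ C)
    (habs : ∀ n, (P.map fun ω => (x n ω, M (n + 1) ω))
      ≪ (volume : Measure (Euc d × Euc d)))
    (t : ℕ → ℝ) (ht : ∀ n, t n = ∑ m ∈ Finset.range n, a m)
    (ν : Ω → ℕ → Measure (Euc d × Euc d))
    (hν : ∀ ω n, ν ω n = (ENNReal.ofReal (t n))⁻¹ •
      ∑ k ∈ Finset.range n, ENNReal.ofReal (a k) • Measure.dirac (x k ω, h (x k ω))) :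
    ∀ᵐ ω ∂P,
      (∀ n, h (x n ω) ∈ Filippov h (x n ω)) ∧
      ∀ μstar : Measure (Euc d × Euc d), IsProbabilityMeasure μstar →
        ∀ φ : ℕ → ℕ, StrictMono φ →
        (∀ g : BoundedContinuousFunction (Euc d × Euc d) ℝ,
          Tendsto (fun j => ∫ p, g p ∂(ν ω (φ j))) atTop (𝓝 (∫ p, g p ∂μstar))) →
        μstar {p : Euc d × Euc d | p.2 ∈ Filippov h p.1} = 1 := by
  obtain ⟨E, hEmeas, hE0, hEfil⟩ := exists_null_filippov h
  have hxmeas : ∀ n, Measurable (x n) := fun n =>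
    ((hx_adapted n).mono (ℱ.le n)).measurable
  have hMmeas : ∀ n, Measurable (M (n + 1)) := fun n =>
    ((hM_adapted n).mono (ℱ.le (n + 1))).measurable
  have hnull : ∀ n, ∀ᵐ ω ∂P, x n ω ∉ E := by
    intro n
    have hf : Measurable fun ω => (x n ω, M (n + 1) ω) := (hxmeas n).prodMk (hMmeas n)
    have h1 : (volume : Measure (Euc d × Euc d)) (E ×ˢ (univ : Set (Euc d))) = 0 := by
      rw [Measure.volume_eq_prod, Measure.prod_prod, hE0, zero_mul]
    have h2 := habs n h1
    rw [Measure.map_apply hf (hEmeas.prod MeasurableSet.univ)] at h2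
    have h3 : (fun ω => (x n ω, M (n + 1) ω)) ⁻¹' (E ×ˢ (univ : Set (Euc d)))
        = {ω | x n ω ∈ E} := by
      ext ω; simp [Set.mem_prod]
    rw [h3] at h2
    rw [ae_iff]
    simpa only [not_not] using h2
  have hae : ∀ᵐ ω ∂P, ∀ n, x n ω ∉ E := ae_all_iff.2 hnull
  filter_upwards [hae] with ω hω
  have part1 : ∀ n, h (x n ω) ∈ Filippov h (x n ω) := fun n => hEfil _ (hω n)
  refine ⟨part1, ?_⟩
  intro μstar hμprob φ hφ hconv
  set G := {p : Euc d × Euc d | p.2 ∈ Filippov h p.1} with hGdef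
  have hGc : IsClosed G := isClosed_filippov_graph h
  have hGm : MeasurableSet G := hGc.measurableSet
  have hmemG : ∀ k, (x k ω, h (x k ω)) ∈ G := fun k => part1 k
  have hGne : G.Nonempty := ⟨_, hmemG 0⟩
  have htt : Tendsto t atTop atTop := by
    have he : t = fun n => ∑ m ∈ Finset.range n, a m := funext ht
    rw [he]; exact ha_div
  obtain ⟨J, hJ⟩ := eventually_atTop.1 (htt.eventually_gt_atTop 0)
  have hν_univ : ∀ n, 0 < t n → ν ω n univ = 1 := by
    intro n htn
    rw [hν]
    simp only [Measure.smul_apply, Measure.finset_sum_apply, measure_univ,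
      smul_eq_mul, mul_one]
    rw [← ENNReal.ofReal_sum_of_nonneg (fun k _ => ha_nonneg k), ← ht n,
      ENNReal.inv_mul_cancel (by simp [ENNReal.ofReal_pos.2 htn, (ENNReal.ofReal_pos.2 htn).ne'])
        ENNReal.ofReal_ne_top]
  have hν_Gc : ∀ n, ν ω n Gᶜ = 0 := by
    intro n
    rw [hν]
    simp only [Measure.smul_apply, Measure.finset_sum_apply,
      Measure.dirac_apply' _ hGm.compl]
    have hz : ∀ k ∈ Finset.range n,
        ENNReal.ofReal (a k) • (Gᶜ).indicator (1 : (Euc d × Euc d) → ENNReal)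
          (x k ω, h (x k ω)) = 0 := by
      intro k _
      rw [Set.indicator_of_notMem (by simpa using hmemG k)]
      simp
    rw [Finset.sum_congr rfl hz]
    simp
  have hint : ∀ g : BoundedContinuousFunction (Euc d × Euc d) ℝ,
      (∀ p ∈ G, g p = 1) → ∀ n, 0 < t n → ∫ p, g p ∂(ν ω n) = 1 := by
    intro g hg n htn
    have hone : IsProbabilityMeasure (ν ω n) := ⟨hν_univ n htn⟩
    have hae1 : (fun p => g p) =ᵐ[ν ω n] fun _ => (1 : ℝ) := by
      rw [Filter.EventuallyEq, ae_iff]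
      refine measure_mono_null ?_ (hν_Gc n)
      intro p hp
      simp only [mem_setOf_eq] at hp
      by_contra hc
      exact hp (hg p (not_not.1 (by simpa using hc)))
    rw [integral_congr_ae hae1]
    simp
  set f : ℕ → (Euc d × Euc d) → ℝ := fun m p => max (1 - m * infDist p G) 0 with hfdef
  have hfcont : ∀ m, Continuous (f m) := fun m =>
    ((continuous_const.sub (continuous_const.mul (continuous_infDist_pt G))).max
      continuous_const)
  have hfbd : ∀ m p, ‖f m p‖ ≤ 1 := by
    intro m p
    rw [Real.norm_eq_abs, abs_le]
    constructor
    · have := le_max_right (1 - m * infDist p G) 0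
      linarith
    · refine max_le ?_ zero_le_one
      have h1 := infDist_nonneg (s := G) (x := p)
      have h2 : (0:ℝ) ≤ (m : ℝ) := Nat.cast_nonneg m
      nlinarith
  set g : ℕ → BoundedContinuousFunction (Euc d × Euc d) ℝ := fun m =>
    BoundedContinuousFunction.ofNormedAddCommGroup (f m) (hfcont m) 1 (hfbd m) with hgdef
  have hgcoe : ∀ m p, g m p = f m p := fun m p => rfl
  have hgG : ∀ m, ∀ p ∈ G, g m p = 1 := by
    intro m p hp
    rw [hgcoe, hfdef]
    simp [infDist_zero_of_mem hp]
  have hμint : ∀ m, ∫ p, g m p ∂μstar = 1 := by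
    intro m
    have h1 := hconv (g m)
    have h2 : Tendsto (fun j => ∫ p, g m p ∂(ν ω (φ j))) atTop (𝓝 1) := by
      refine Tendsto.congr' ?_ (tendsto_const_nhds :
        Tendsto (fun _ : ℕ => (1:ℝ)) atTop (𝓝 1))
      rw [Filter.EventuallyEq, eventually_atTop]
      exact ⟨J, fun j hj =>
        (hint (g m) (hgG m) (φ j) (hJ (φ j) (le_trans hj hφ.le_apply))).symm⟩
    exact tendsto_nhds_unique h1 h2
  have hdct : Tendsto (fun m => ∫ p, g m p ∂μstar) atTop
      (𝓝 (∫ p, G.indicator (1 : (Euc d × Euc d) → ℝ) p ∂μstar)) := by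
    refine tendsto_integral_of_dominated_convergence (fun _ => (1 : ℝ))
      (fun m => (g m).continuous.aestronglyMeasurable) (integrable_const 1)
      (fun m => ae_of_all _ fun p => by rw [hgcoe]; exact hfbd m p)
      (ae_of_all _ fun p => ?_)
    by_cases hp : p ∈ G
    · rw [Set.indicator_of_mem hp]
      have : ∀ m : ℕ, g m p = 1 := fun m => hgG m p hp
      simp only [this]
      exact tendsto_const_nhds
    · rw [Set.indicator_of_notMem hp]
      have hr : 0 < infDist p G := (hGc.notMem_iff_infDist_pos hGne).1 hp
      refine Tendsto.congr' ?_ (tendsto_const_nhds :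
        Tendsto (fun _ : ℕ => (0:ℝ)) atTop (𝓝 0))
      rw [Filter.EventuallyEq, eventually_atTop]
      refine ⟨⌈(infDist p G)⁻¹⌉₊, fun m hm => ?_⟩
      have h1 : (infDist p G)⁻¹ ≤ (m : ℝ) := le_trans (Nat.le_ceil _) (Nat.cast_le.2 hm)
      have h2 : 1 ≤ (m : ℝ) * infDist p G := by
        nlinarith [mul_le_mul_of_nonneg_right h1 hr.le, inv_mul_cancel₀ hr.ne']
      have h3 : f m p = 0 := max_eq_right (by linarith)
      rw [hgcoe, h3]
  have hlim2 : Tendsto (fun m : ℕ => ∫ p, g m p ∂μstar) atTop (𝓝 1) := by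
    simp only [hμint]; exact tendsto_const_nhds
  have hindic : ∫ p, G.indicator (1 : (Euc d × Euc d) → ℝ) p ∂μstar = 1 :=
    tendsto_nhds_unique hdct hlim2
  rw [integral_indicator_one hGm] at hindic
  exact (ENNReal.toReal_eq_one_iff _).1 hindic
end
end
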